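/- arXiv:2507.22029 — 8 statements merged into one kernel-verified Lean document; each statement's English description precedes it below -/
import Mathlib

section
/- Let L be the Laplacian matrix of a finite connected weighted graph H = (V,E,c) with positive conductances. Then for any fixed vertex o ∈ V, the determinant of the (|V|−1)×(|V|−1) matrix L^{(o)}, obtained from L by deleting the row and column corresponding to o, equals the weighted number of spanning trees of H: det(L^{(o)}) = Σ_{T∈𝒯(H)} c_T, where 𝒯(H) is the set of all spanning trees of H and c_T := ∏_{e∈E(T)} c_e. -/
set_option linter.unusedSectionVars false

noncomputable section

/-- The weighted Laplacian matrix `L = D - A` of a weighted graph: `D` is the diagonal matrix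
of weighted degrees and `A` the weighted adjacency matrix. -/
def weightedLaplacian {V : Type*} [Fintype V] [DecidableEq V] (G : SimpleGraph V)
    [DecidableRel G.Adj] (c : V → V → ℝ) : Matrix V V ℝ :=
  Matrix.of fun u v =>
    (if u = v then ∑ w : V, (if G.Adj u w then c u w else 0) else 0) -
      (if G.Adj u v then c u v else 0)

/-- The weight `c_T = ∏_{e ∈ E(T)} c_e` of a (spanning) tree `T`, for a symmetric conductance
function `c`. -/
def treeWeight {V : Type*} [Fintype V] (T : SimpleGraph V)
    (c : V → V → ℝ) (hc : ∀ u v, c u v = c v u) : ℝ :=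
  have : DecidableEq V := Classical.decEq V
  have : DecidableRel T.Adj := Classical.decRel _
  ∏ e ∈ T.edgeFinset, Sym2.lift ⟨c, hc⟩ e

namespace MTT

open SimpleGraph Finset Matrix

variable {V : Type*} [Fintype V] [DecidableEq V]

/-- signed incidence of vertex `v` with edge `e`, with respect to the orientation coming
from `Quot.out`. -/
noncomputable def inc (v : V) (e : Sym2 V) : ℝ :=
  if v = e.out.1 then 1 else if v = e.out.2 then -1 else 0

lemma out_mk (e : Sym2 V) : s(e.out.1, e.out.2) = e := Quot.out_eq e

lemma out_ne {e : Sym2 V} (h : ¬ e.IsDiag) : e.out.1 ≠ e.out.2 := by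
  intro hh
  apply h
  rw [← out_mk e, hh]
  exact Sym2.isDiag_iff_proj_eq |>.mpr rfl

lemma mem_iff_out {v : V} {e : Sym2 V} : v ∈ e ↔ v = e.out.1 ∨ v = e.out.2 := by
  conv_lhs => rw [← out_mk e]
  exact Sym2.mem_iff

lemma inc_eq_zero_of_not_mem {v : V} {e : Sym2 V} (h : v ∉ e) : inc v e = 0 := by
  rw [mem_iff_out] at h
  push_neg at h
  simp [inc, h.1, h.2]

/-- `inc` as difference of indicators, valid for non-diagonal `e`. -/
lemma inc_eq_sub {e : Sym2 V} (hd : ¬ e.IsDiag) (v : V) :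
    inc v e = (if v = e.out.1 then 1 else 0) - (if v = e.out.2 then 1 else 0) := by
  have hne := out_ne hd
  unfold inc
  by_cases h1 : v = e.out.1
  · subst h1; simp [hne]
  · by_cases h2 : v = e.out.2 <;> simp [h1, h2, hne.symm]

lemma sum_inc_mul (x : V → ℝ) {e : Sym2 V} (hd : ¬ e.IsDiag) :
    ∑ v : V, x v * inc v e = x e.out.1 - x e.out.2 := by
  simp only [inc_eq_sub hd, mul_sub, Finset.sum_sub_distrib, mul_ite, mul_one, mul_zero]
  rw [Finset.sum_ite_eq' Finset.univ e.out.1 x, Finset.sum_ite_eq' Finset.univ e.out.2 x]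
  simp

lemma inc_mul_self {v : V} {e : Sym2 V} (hd : ¬ e.IsDiag) :
    inc v e * inc v e = if v ∈ e then 1 else 0 := by
  have hne := out_ne hd
  unfold inc
  by_cases h1 : v = e.out.1
  · subst h1; simp [hne, mem_iff_out]
  · by_cases h2 : v = e.out.2
    · subst h2; simp [h1, mem_iff_out]
    · simp [h1, h2, mem_iff_out]

lemma inc_mul_of_ne {u v : V} {e : Sym2 V} (huv : u ≠ v) (hd : ¬ e.IsDiag) :
    inc u e * inc v e = if e = s(u, v) then -1 else 0 := by
  have hne := out_ne hd
  by_cases h : e = s(u, v)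
  · have h1 : u ∈ e := by rw [h]; simp
    have h2 : v ∈ e := by rw [h]; simp
    rw [mem_iff_out] at h1 h2
    rw [if_pos h]
    rcases h1 with h1 | h1 <;> rcases h2 with h2 | h2
    · exact absurd (h1.trans h2.symm) huv
    · rw [inc, inc, if_pos h1, if_neg (show ¬ v = e.out.1 by rw [h2]; exact hne.symm),
        if_pos h2]; ring
    · rw [inc, inc, if_neg (show ¬ u = e.out.1 by rw [h1]; exact hne.symm), if_pos h1,
        if_pos h2]; ring
    · exact absurd (h1.trans h2.symm) huv
  · simp only [h, if_false]
    by_cases h1 : u ∈ e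
    · by_cases h2 : v ∈ e
      · exact absurd ((Sym2.mem_and_mem_iff huv).mp ⟨h1, h2⟩) h
      · rw [inc_eq_zero_of_not_mem h2, mul_zero]
    · rw [inc_eq_zero_of_not_mem h1, zero_mul]

/-- Expansion of `det (A * B)` by multilinearity: a rectangular precursor of Cauchy–Binet. -/
lemma det_mul_expand {m E' : Type*} [Fintype m] [DecidableEq m] [Fintype E'] [DecidableEq E']
    (A : Matrix m E' ℝ) (B : Matrix E' m ℝ) :
    (A * B).det = ∑ p : m → E', (A.submatrix id p).det * ∏ i, B (p i) i := by
  simp only [Matrix.det_apply', Matrix.mul_apply, Matrix.submatrix_apply, id_eq]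
  calc ∑ σ : Equiv.Perm m, ((Equiv.Perm.sign σ : ℤ) : ℝ) * ∏ i, ∑ e, A (σ i) e * B e i
      = ∑ σ : Equiv.Perm m, ∑ p : m → E', ((Equiv.Perm.sign σ : ℤ) : ℝ) *
          ∏ i, A (σ i) (p i) * B (p i) i := by
        simp_rw [Finset.prod_univ_sum, Fintype.piFinset_univ, Finset.mul_sum]
    _ = ∑ p : m → E', ∑ σ : Equiv.Perm m,
          (((Equiv.Perm.sign σ : ℤ) : ℝ) * ∏ i, A (σ i) (p i)) * ∏ i, B (p i) i := by
        rw [Finset.sum_comm]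
        refine Finset.sum_congr rfl fun p _ => Finset.sum_congr rfl fun σ _ => ?_
        rw [Finset.prod_mul_distrib, mul_assoc]
    _ = _ := by
        refine Finset.sum_congr rfl fun p _ => ?_
        rw [← Finset.sum_mul]

/-- determinant as a signed sum over column choices. -/
lemma det_apply_col {m : Type*} [Fintype m] [DecidableEq m] (N : Matrix m m ℝ) :
    ∑ σ : Equiv.Perm m, ((Equiv.Perm.sign σ : ℤ) : ℝ) * ∏ i, N i (σ i) = N.det := by
  rw [← Matrix.det_transpose N, Matrix.det_apply']
  exact Finset.sum_congr rfl fun σ _ => by simp [Matrix.transpose_apply]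

/-- A matrix which is "triangular" with respect to a weight function has determinant equal to
the product of its diagonal entries. -/
lemma det_eq_prod_diag {m : Type*} [Fintype m] [DecidableEq m] (P : Matrix m m ℝ) (w : m → ℕ)
    (hd : ∀ i j, P i j ≠ 0 → i = j ∨ w i < w j) : P.det = ∏ i, P i i := by
  rw [Matrix.det_apply']
  rw [Finset.sum_eq_single (1 : Equiv.Perm m)]
  · simp
  · intro σ _ hσ
    rcases not_forall.mp (fun h => hσ (Equiv.ext fun i => h i)) with ⟨i₀, hi₀⟩
    have : ∏ i, P (σ i) i = 0 := by
      by_contra hcp0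
      have hcp : ∀ i ∈ Finset.univ, P (σ i) i ≠ 0 := Finset.prod_ne_zero_iff.mp hcp0
      have key : ∀ i, w (σ i) ≤ w i := by
        intro i
        rcases hd (σ i) i (hcp i (Finset.mem_univ i)) with h | h
        · rw [h]
        · exact h.le
      have hlt : w (σ i₀) < w i₀ := by
        rcases hd (σ i₀) i₀ (hcp i₀ (Finset.mem_univ i₀)) with h | h
        · exact absurd h hi₀
        · exact h
      have h1 : ∑ i, w (σ i) < ∑ i, w i :=
        Finset.sum_lt_sum (fun i _ => key i) ⟨i₀, Finset.mem_univ i₀, hlt⟩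
      rw [Equiv.sum_comp σ w] at h1
      exact lt_irrefl _ h1
    rw [this, mul_zero]
  · intro h
    exact absurd (Finset.mem_univ 1) h

section Graph

variable (G : SimpleGraph V) [DecidableRel G.Adj]

lemma adj_out {e : Sym2 V} (he : e ∈ G.edgeSet) : G.Adj e.out.1 e.out.2 := by
  rw [← SimpleGraph.mem_edgeSet, out_mk e]
  exact he

lemma not_isDiag_of_mem {e : Sym2 V} (he : e ∈ G.edgeSet) : ¬ e.IsDiag :=
  SimpleGraph.not_isDiag_of_mem_edgeSet G he

variable (c : V → V → ℝ) (hc : ∀ u v, c u v = c v u)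

/-- Factorization of the weighted Laplacian through the incidence matrix. -/
lemma lap_entry (u v : V) :
    weightedLaplacian G c u v
      = ∑ e ∈ G.edgeFinset, Sym2.lift ⟨c, hc⟩ e * (inc u e * inc v e) := by
  classical
  by_cases huv : u = v
  · subst huv
    have h1 : ∀ e ∈ G.edgeFinset, Sym2.lift ⟨c, hc⟩ e * (inc u e * inc u e)
        = if u ∈ e then Sym2.lift ⟨c, hc⟩ e else 0 := by
      intro e he
      rw [inc_mul_self (not_isDiag_of_mem G (SimpleGraph.mem_edgeFinset.mp he))]
      simp [mul_ite]
    rw [Finset.sum_congr rfl h1, ← Finset.sum_filter]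
    have h2 : weightedLaplacian G c u u = ∑ w ∈ Finset.univ.filter (fun w => G.Adj u w), c u w := by
      simp [weightedLaplacian, Finset.sum_filter]
    rw [h2]
    refine Finset.sum_bij' (fun w _ => s(u, w))
      (fun e he => Sym2.Mem.other' (Finset.mem_filter.mp he).2) ?_ ?_ ?_ ?_ ?_
    · intro w hw
      rw [Finset.mem_filter] at hw ⊢
      exact ⟨SimpleGraph.mem_edgeFinset.mpr ((G.mem_edgeSet).mpr hw.2), Sym2.mem_mk_left u w⟩
    · intro e he
      rw [Finset.mem_filter]
      refine ⟨Finset.mem_univ _, ?_⟩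
      rw [← G.mem_edgeSet, Sym2.other_spec' (Finset.mem_filter.mp he).2]
      exact SimpleGraph.mem_edgeFinset.mp (Finset.mem_filter.mp he).1
    · intro w hw
      exact Sym2.congr_right.mp (Sym2.other_spec' (Sym2.mem_mk_left u w))
    · intro e he
      exact Sym2.other_spec' (Finset.mem_filter.mp he).2
    · intro w hw
      exact (Sym2.lift_mk ⟨c, hc⟩ u w).symm
  · have h1 : ∀ e ∈ G.edgeFinset, Sym2.lift ⟨c, hc⟩ e * (inc u e * inc v e)
        = if e = s(u, v) then - Sym2.lift ⟨c, hc⟩ e else 0 := by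
      intro e he
      rw [inc_mul_of_ne huv (not_isDiag_of_mem G (SimpleGraph.mem_edgeFinset.mp he))]
      split <;> ring
    rw [Finset.sum_congr rfl h1, Finset.sum_ite_eq' G.edgeFinset (s(u,v))]
    simp only [weightedLaplacian, Matrix.of_apply, huv, if_false, zero_sub,
      SimpleGraph.mem_edgeFinset, SimpleGraph.mem_edgeSet]
    by_cases hadj : G.Adj u v <;> simp [hadj, Sym2.lift_mk]


variable (o : V)

/-- The graph spanned by a choice of edges. -/
def Tg (p : {v : V // v ≠ o} → {e : Sym2 V // e ∈ G.edgeFinset}) : SimpleGraph V :=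
  SimpleGraph.fromEdgeSet (Set.range fun i => (p i : Sym2 V))

lemma card_ne (o : V) : Fintype.card {v : V // v ≠ o} = Fintype.card V - 1 := by
  have h := Fintype.card_subtype_compl (fun v : V => v = o)
  rw [Fintype.card_subtype_eq] at h
  exact h

lemma Tg_le (p : {v : V // v ≠ o} → {e : Sym2 V // e ∈ G.edgeFinset}) : Tg G o p ≤ G := by
  intro a b hab
  rw [Tg, SimpleGraph.fromEdgeSet_adj] at hab
  obtain ⟨⟨i, hi⟩, -⟩ := hab
  simp only [] at hi
  have h2 := SimpleGraph.mem_edgeFinset.mp (p i).2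
  rw [hi] at h2
  exact (G.mem_edgeSet).mp h2

/-- the key vanishing lemma: if the chosen edges do not connect everything to `o`, the
corresponding incidence minor is singular. -/
lemma detZ (p : {v : V // v ≠ o} → {e : Sym2 V // e ∈ G.edgeFinset}) {u : V}
    (hu : ¬ (Tg G o p).Reachable o u) :
    (Matrix.of fun i j : {v : V // v ≠ o} => inc (i : V) ((p j : Sym2 V))).det = 0 := by
  classical
  have hne : u ≠ o := by rintro rfl; exact hu (SimpleGraph.Reachable.refl u)
  rw [← Matrix.exists_vecMul_eq_zero_iff]
  refine ⟨fun i => if (Tg G o p).Reachable u (i : V) then 1 else 0, ?_, ?_⟩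
  · intro h0
    have h1 := congrFun h0 ⟨u, hne⟩
    rw [Pi.zero_apply, if_pos (SimpleGraph.Reachable.refl u)] at h1
    exact one_ne_zero h1
  · funext j
    set x : V → ℝ := fun v => if (Tg G o p).Reachable u v then 1 else 0 with hx
    set e : Sym2 V := (p j : Sym2 V) with hE
    have hmem : e ∈ G.edgeSet := SimpleGraph.mem_edgeFinset.mp (p j).2
    have hd : ¬ e.IsDiag := not_isDiag_of_mem G hmem
    have hTadj : (Tg G o p).Adj e.out.1 e.out.2 := by
      rw [Tg, SimpleGraph.fromEdgeSet_adj]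
      refine ⟨?_, out_ne hd⟩
      rw [out_mk e]
      exact ⟨j, rfl⟩
    have hvm : (Matrix.vecMul (fun i : {v : V // v ≠ o} => x (i : V))
        (Matrix.of fun i j : {v : V // v ≠ o} => inc (i : V) ((p j : Sym2 V)))) j
        = ∑ i : {v : V // v ≠ o}, x (i : V) * inc (i : V) e := by
      simp [Matrix.vecMul, dotProduct, hE]
    rw [Pi.zero_apply]
    have hsub : ∑ i : {v : V // v ≠ o}, x (i : V) * inc (i : V) e
        = ∑ v ∈ Finset.univ.erase o, x v * inc v e :=
      (Finset.sum_subtype (Finset.univ.erase o) (fun v => by simp) (fun v => x v * inc v e)).symm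
    have hall : x o * inc o e + ∑ v ∈ Finset.univ.erase o, x v * inc v e
        = ∑ v : V, x v * inc v e :=
      Finset.add_sum_erase Finset.univ (fun v => x v * inc v e) (Finset.mem_univ o)
    have hxo : x o = 0 := by
      simp only [hx]
      exact if_neg (fun h => hu h.symm)
    have hfull : ∑ v : V, x v * inc v e = x e.out.1 - x e.out.2 := sum_inc_mul x hd
    have hends : x e.out.1 = x e.out.2 := by
      simp only [hx]
      by_cases hr : (Tg G o p).Reachable u e.out.1
      · rw [if_pos hr, if_pos (hr.trans hTadj.reachable)]
      · rw [if_neg hr, if_neg (fun h => hr (h.trans hTadj.symm.reachable))]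
    rw [hvm, hsub]
    rw [hxo, zero_mul, zero_add] at hall
    rw [hall, hfull, hends, sub_self]

section Conn

variable {T : SimpleGraph V}

lemma exists_parent (hC : T.Connected) {o v : V} (hv : v ≠ o) :
    ∃ w, T.Adj v w ∧ T.dist o w + 1 = T.dist o v := by
  obtain ⟨p, hp⟩ := hC.exists_walk_length_eq_dist v o
  obtain ⟨w, h, q, rfl⟩ := SimpleGraph.Walk.exists_eq_cons_of_ne hv p
  obtain ⟨r, hr⟩ := hC.exists_walk_length_eq_dist w o
  refine ⟨w, h, ?_⟩
  have h1 : T.dist w o ≤ q.length := SimpleGraph.dist_le q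
  have h2 : T.dist v o ≤ T.dist w o + 1 := by
    have h3 := SimpleGraph.dist_le (SimpleGraph.Walk.cons h r)
    simpa [SimpleGraph.Walk.length_cons, hr] using h3
  have h3 : T.dist v o = q.length + 1 := by
    simpa [SimpleGraph.Walk.length_cons] using hp.symm
  rw [show T.dist o w = T.dist w o from SimpleGraph.dist_comm,
    show T.dist o v = T.dist v o from SimpleGraph.dist_comm]
  omega

/-- the parent of a vertex, with respect to a connected graph and a root `o`. -/
noncomputable def parent (hC : T.Connected) (o v : V) : V :=
  if hv : v = o then o else (exists_parent hC hv).choose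

lemma parent_spec (hC : T.Connected) {o v : V} (hv : v ≠ o) :
    T.Adj v (parent hC o v) ∧ T.dist o (parent hC o v) + 1 = T.dist o v := by
  rw [parent, dif_neg hv]
  exact (exists_parent hC hv).choose_spec

lemma pedge_inj (hC : T.Connected) (o : V) :
    Function.Injective (fun v : {v : V // v ≠ o} => s((v : V), parent hC o (v : V))) := by
  intro a b hab
  rcases Sym2.eq_iff.mp hab with ⟨h1, -⟩ | ⟨h1, h2⟩
  · exact Subtype.ext h1
  · exfalso
    have sa := (parent_spec hC a.2).2
    have sb := (parent_spec hC b.2).2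
    rw [← h1] at sb
    rw [h2] at sa
    omega

lemma card_le_of_connected (hC : T.Connected) :
    Fintype.card V - 1 ≤ T.edgeSet.ncard := by
  classical
  obtain ⟨o⟩ := hC.nonempty
  have hinj : Function.Injective (fun v : {v : V // v ≠ o} =>
      (⟨s((v : V), parent hC o (v : V)), (parent_spec hC v.2).1⟩ : T.edgeSet)) := by
    intro a b hab
    exact pedge_inj hC o (congrArg Subtype.val hab)
  have h1 := Nat.card_le_card_of_injective _ hinj
  rw [Nat.card_eq_fintype_card, card_ne] at h1
  rwa [Nat.card_coe_set_eq] at h1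

lemma connected_del_of_not_bridge (hC : T.Connected) {v w : V} (hadj : T.Adj v w)
    (hnb : ¬ T.IsBridge s(v, w)) : (T \ SimpleGraph.fromEdgeSet {s(v, w)}).Connected := by
  rw [SimpleGraph.isBridge_iff] at hnb
  push_neg at hnb
  have hr := hnb
  have step : ∀ a b : V, T.Adj a b → (T \ SimpleGraph.fromEdgeSet {s(v, w)}).Reachable a b := by
    intro a b hab
    by_cases he : s(a, b) = s(v, w)
    · rcases Sym2.eq_iff.mp he with ⟨rfl, rfl⟩ | ⟨rfl, rfl⟩
      · exact hr
      · exact hr.symm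
    · refine SimpleGraph.Adj.reachable ?_
      rw [SimpleGraph.sdiff_adj]
      refine ⟨hab, ?_⟩
      rw [SimpleGraph.fromEdgeSet_adj]
      rintro ⟨hm, -⟩
      exact he (Set.mem_singleton_iff.mp hm)
  rw [SimpleGraph.connected_iff]
  refine ⟨?_, hC.nonempty⟩
  intro a b
  obtain ⟨pw⟩ := hC.preconnected a b
  induction pw with
  | nil => exact SimpleGraph.Reachable.refl _
  | cons h q ih => exact (step _ _ h).trans ih

lemma isTree_of_card (hC : T.Connected)
    (hcard : T.edgeSet.ncard + 1 = Fintype.card V) : T.IsTree := by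
  classical
  refine ⟨hC, ?_⟩
  by_contra hcy
  rw [SimpleGraph.isAcyclic_iff_forall_adj_isBridge] at hcy
  push_neg at hcy
  obtain ⟨v, w, hadj, hnb⟩ := hcy
  have hdel := connected_del_of_not_bridge hC hadj hnb
  have hle := card_le_of_connected hdel
  have hes : (T \ SimpleGraph.fromEdgeSet {s(v, w)}).edgeSet = T.edgeSet \ {s(v, w)} :=
    SimpleGraph.edgeSet_deleteEdges {s(v, w)}
  rw [hes, Set.ncard_diff_singleton_of_mem (T.mem_edgeSet.mpr hadj)] at hle
  have hpos : 0 < T.edgeSet.ncard :=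
    (Set.ncard_pos (Set.toFinite _)).mpr ⟨s(v, w), (T.mem_edgeSet.mpr hadj)⟩
  omega

end Conn

end Graph

end MTT

/-- **Kirchhoff's weighted Matrix-Tree theorem.**  For a finite connected weighted graph
`H = (V,E,c)` with positive conductances and any vertex `o`, the determinant of the reduced
Laplacian `L^{(o)}` (delete the row and column of `o`) equals the weighted number of spanning
trees: `det L^{(o)} = Σ_{T ∈ 𝒯(H)} c_T`. -/
theorem weighted_matrix_tree_theorem {V : Type*} [Fintype V] [DecidableEq V]
    (G : SimpleGraph V) [DecidableRel G.Adj] (hG : G.Connected)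
    (c : V → V → ℝ) (hc : ∀ u v, c u v = c v u)
    (hpos : ∀ u v, G.Adj u v → 0 < c u v) (o : V) :
    ((weightedLaplacian G c).submatrix
        (fun v : {v : V // v ≠ o} => (v : V)) (fun v : {v : V // v ≠ o} => (v : V))).det
      = ∑' T : {T : SimpleGraph V // T ≤ G ∧ T.IsTree}, treeWeight T.1 c hc := by
  classical
  set A : Matrix {v : V // v ≠ o} {e : Sym2 V // e ∈ G.edgeFinset} ℝ :=
    Matrix.of (fun i e => MTT.inc (i : V) (e : Sym2 V)) with hA
  set B : Matrix {e : Sym2 V // e ∈ G.edgeFinset} {v : V // v ≠ o} ℝ :=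
    Matrix.of (fun e i => Sym2.lift ⟨c, hc⟩ (e : Sym2 V) * MTT.inc (i : V) (e : Sym2 V)) with hB
  have hfact : (weightedLaplacian G c).submatrix (fun v : {v : V // v ≠ o} => (v : V))
      (fun v : {v : V // v ≠ o} => (v : V)) = A * B := by
    ext i j
    rw [Matrix.submatrix_apply, MTT.lap_entry G c hc, Matrix.mul_apply, ← Finset.sum_coe_sort]
    exact Finset.sum_congr rfl fun e _ => by simp only [hA, hB, Matrix.of_apply]; ring
  rw [hfact, MTT.det_mul_expand]
  have hN : Fintype.card {v : V // v ≠ o} = Fintype.card V - 1 := MTT.card_ne o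
  have hNV : 1 ≤ Fintype.card V := Fintype.card_pos_iff.mpr ⟨o⟩
  set good : ({v : V // v ≠ o} → {e : Sym2 V // e ∈ G.edgeFinset}) → Prop :=
    fun p => Function.Injective p ∧ (MTT.Tg G o p).IsTree with hgood
  -- step 1: only "good" edge selections contribute
  refine Eq.trans (Finset.sum_subset
      (Finset.filter_subset good Finset.univ) ?_).symm ?_
  · intro p _ hp
    rw [Finset.mem_filter, not_and] at hp
    have hng : ¬ good p := hp (Finset.mem_univ p)
    rw [hgood] at hng
    by_cases hinj : Function.Injective p
    · have hnottree : ¬ (MTT.Tg G o p).IsTree := fun h => hng ⟨hinj, h⟩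
      have hnc : ¬ (MTT.Tg G o p).Connected := by
        intro hCon
        apply hnottree
        apply MTT.isTree_of_card hCon
        have hes : (MTT.Tg G o p).edgeSet
            = Set.range (fun i : {v : V // v ≠ o} => ((p i : Sym2 V))) := by
          rw [MTT.Tg, SimpleGraph.edgeSet_fromEdgeSet]
          ext e
          constructor
          · exact fun h => h.1
          · intro h
            refine ⟨h, ?_⟩
            obtain ⟨i, hi⟩ := h
            simp only [] at hi
            rw [← hi]
            exact MTT.not_isDiag_of_mem G (SimpleGraph.mem_edgeFinset.mp (p i).2)
        rw [hes]
        have hrc : (Set.range fun i : {v : V // v ≠ o} => ((p i : Sym2 V))).ncard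
            = Fintype.card {v : V // v ≠ o} := by
          rw [← Nat.card_coe_set_eq, Nat.card_range_of_injective
            (fun a b hab => hinj (Subtype.ext hab)), Nat.card_eq_fintype_card]
        rw [hrc, hN]
        omega
      obtain ⟨u, hu⟩ : ∃ u, ¬ (MTT.Tg G o p).Reachable o u := by
        by_contra hco
        push_neg at hco
        refine hnc ?_
        rw [SimpleGraph.connected_iff]
        exact ⟨fun a b => (hco a).symm.trans (hco b), ⟨o⟩⟩
      have hdz := MTT.detZ G o p hu
      have heq : A.submatrix id p
          = Matrix.of fun i j : {v : V // v ≠ o} => MTT.inc (i : V) ((p j : Sym2 V)) := rfl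
      rw [heq, hdz, zero_mul]
    · obtain ⟨a, b, hab, hne⟩ := Function.not_injective_iff.mp hinj
      have hz : (A.submatrix id p).det = 0 :=
        Matrix.det_zero_of_column_eq hne
          (fun k => by rw [Matrix.submatrix_apply, Matrix.submatrix_apply, hab])
      rw [hz, zero_mul]
  -- step 2: fiber the good selections over spanning trees
  set treeF : Finset (SimpleGraph V) := Finset.univ.filter (fun T => T ≤ G ∧ T.IsTree)
    with htreeF
  have hmaps : ∀ p ∈ Finset.univ.filter good, MTT.Tg G o p ∈ treeF := by
    intro p hp
    rw [Finset.mem_filter] at hp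
    rw [htreeF, Finset.mem_filter]
    exact ⟨Finset.mem_univ _, MTT.Tg_le G o p, hp.2.2⟩
  refine Eq.trans (Finset.sum_fiberwise_of_maps_to hmaps _).symm ?_
  -- step 3: each fiber sums to the tree weight
  have hinner : ∀ T ∈ treeF, (∑ p ∈ (Finset.univ.filter good).filter
      (fun p => MTT.Tg G o p = T), (A.submatrix id p).det * ∏ i, B (p i) i)
      = treeWeight T c hc := by
    intro T hT
    rw [htreeF, Finset.mem_filter] at hT
    obtain ⟨-, hTG, hTree⟩ := hT
    have hC : T.Connected := hTree.1
    have hedge : ∀ v : {v : V // v ≠ o}, s((v : V), MTT.parent hC o (v : V)) ∈ G.edgeFinset :=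
      fun v => SimpleGraph.mem_edgeFinset.mpr
        (SimpleGraph.edgeSet_mono hTG ((T.mem_edgeSet).mpr (MTT.parent_spec hC v.2).1))
    set g : {v : V // v ≠ o} → {e : Sym2 V // e ∈ G.edgeFinset} :=
      fun v => ⟨s((v : V), MTT.parent hC o (v : V)), hedge v⟩ with hg
    have hginj : Function.Injective g := fun a b hab =>
      MTT.pedge_inj hC o (congrArg Subtype.val hab)
    have hcards : T.edgeSet.ncard = Fintype.card {v : V // v ≠ o} := by
      have h1 := hTree.card_edgeFinset
      have h2 : T.edgeSet.ncard = T.edgeFinset.card := Set.ncard_eq_toFinset_card' T.edgeSet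
      rw [h2, hN]
      omega
    have hrange : (Set.range fun v : {v : V // v ≠ o} => (g v : Sym2 V)) = T.edgeSet := by
      apply Set.eq_of_subset_of_ncard_le
      · rintro e ⟨v, rfl⟩
        exact (T.mem_edgeSet).mpr (MTT.parent_spec hC v.2).1
      · rw [hcards]
        have hrc : (Set.range fun v : {v : V // v ≠ o} => (g v : Sym2 V)).ncard
            = Fintype.card {v : V // v ≠ o} := by
          rw [← Nat.card_coe_set_eq, Nat.card_range_of_injective
            (fun a b hab => hginj (Subtype.ext hab)), Nat.card_eq_fintype_card]
        rw [hrc]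
      · exact Set.toFinite _
    set N : Matrix {v : V // v ≠ o} {v : V // v ≠ o} ℝ := A.submatrix id g with hNmat
    have hNdiag : ∀ i, N i i = 1 ∨ N i i = -1 := by
      intro i
      have hdg : ¬ ((g i : Sym2 V)).IsDiag :=
        MTT.not_isDiag_of_mem G (SimpleGraph.mem_edgeFinset.mp (g i).2)
      have hmemi : (i : V) ∈ (g i : Sym2 V) := Sym2.mem_mk_left _ _
      rw [MTT.mem_iff_out] at hmemi
      have hval : N i i = MTT.inc (i : V) ((g i : Sym2 V)) := rfl
      rcases hmemi with h1 | h1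
      · left; rw [hval, MTT.inc, if_pos h1]
      · by_cases h2 : (i : V) = ((g i : Sym2 V)).out.1
        · left; rw [hval, MTT.inc, if_pos h2]
        · right; rw [hval, MTT.inc, if_neg h2, if_pos h1]
    have htri : N.det = ∏ i, N i i := by
      apply MTT.det_eq_prod_diag N (fun i => T.dist o (i : V))
      intro i j hne0
      have hmem : (i : V) ∈ (g j : Sym2 V) := by
        by_contra hnm
        exact hne0 (MTT.inc_eq_zero_of_not_mem hnm)
      have hmem' : (i : V) ∈ s((j : V), MTT.parent hC o (j : V)) := hmem
      rw [Sym2.mem_iff] at hmem'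
      rcases hmem' with h1 | h1
      · left; exact Subtype.ext h1
      · right
        have hs := (MTT.parent_spec hC j.2).2
        rw [h1]
        omega
    have hdet2 : N.det * N.det = 1 := by
      rw [htri, ← Finset.prod_mul_distrib, Finset.prod_eq_one]
      intro i _
      rcases hNdiag i with h | h <;> rw [h] <;> norm_num
    have hW : (∏ v : {v : V // v ≠ o}, Sym2.lift ⟨c, hc⟩ ((g v : Sym2 V)))
        = treeWeight T c hc := by
      simp only [treeWeight]
      refine Finset.prod_bij (fun v _ => (g v : Sym2 V)) ?_ ?_ ?_ ?_
      · intro v _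
        rw [SimpleGraph.mem_edgeFinset, ← hrange]
        exact ⟨v, rfl⟩
      · intro a _ b _ hab
        exact hginj (Subtype.ext hab)
      · intro e he
        rw [SimpleGraph.mem_edgeFinset, ← hrange] at he
        obtain ⟨v, hv⟩ := he
        exact ⟨v, Finset.mem_univ v, hv⟩
      · intro v _
        rfl
    -- the fiber is parametrized by permutations
    have hmemT : ∀ q, q ∈ (Finset.univ.filter good).filter (fun p => MTT.Tg G o p = T) →
        ∀ i, ((q i : Sym2 V)) ∈ T.edgeSet := by
      intro q hq i
      rw [Finset.mem_filter] at hq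
      rw [← hq.2, MTT.Tg, SimpleGraph.edgeSet_fromEdgeSet]
      exact ⟨⟨i, rfl⟩, MTT.not_isDiag_of_mem G (SimpleGraph.mem_edgeFinset.mp (q i).2)⟩
    have hqinj : ∀ q, q ∈ (Finset.univ.filter good).filter (fun p => MTT.Tg G o p = T) →
        Function.Injective q := by
      intro q hq
      rw [Finset.mem_filter, Finset.mem_filter] at hq
      exact hq.1.2.1
    have hgE : Function.Bijective (fun v : {v : V // v ≠ o} =>
        (⟨(g v : Sym2 V), (T.mem_edgeSet).mpr (MTT.parent_spec hC v.2).1⟩ : T.edgeSet)) := by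
      rw [Fintype.bijective_iff_injective_and_card]
      constructor
      · intro a b hab
        have hv := congrArg Subtype.val hab
        simp only [] at hv
        exact hginj (Subtype.ext hv)
      · have hcc : Fintype.card T.edgeSet = T.edgeSet.ncard := by
          rw [← Nat.card_eq_fintype_card, Nat.card_coe_set_eq]
        rw [hcc, hcards]
    set gE : {v : V // v ≠ o} ≃ T.edgeSet := Equiv.ofBijective _ hgE with hgEdef
    have hgEval : ∀ v, ((gE v : Sym2 V)) = (g v : Sym2 V) := fun v => rfl
    have hTgg : ∀ σ : Equiv.Perm {v : V // v ≠ o}, MTT.Tg G o (g ∘ σ) = T := by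
      intro σ
      have h0 : (Set.range fun i => ((g ∘ ⇑σ) i : Sym2 V)) = T.edgeSet := by
        rw [← hrange]
        exact Function.Surjective.range_comp σ.surjective (fun v => (g v : Sym2 V))
      rw [MTT.Tg, h0, SimpleGraph.fromEdgeSet_edgeSet]
    have hgood_g : ∀ σ : Equiv.Perm {v : V // v ≠ o}, good (g ∘ σ) := by
      intro σ
      rw [hgood]
      refine ⟨hginj.comp σ.injective, ?_⟩
      rw [hTgg σ]
      exact hTree
    -- change variables: the fiber is parametrized by permutations
    have hchange : (∑ p ∈ (Finset.univ.filter good).filter (fun p => MTT.Tg G o p = T),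
          (A.submatrix id p).det * ∏ i, B (p i) i)
        = ∑ σ : Equiv.Perm {v : V // v ≠ o},
            (A.submatrix id (g ∘ σ)).det * ∏ i, B ((g ∘ σ) i) i := by
      refine Finset.sum_bij'
        (i := fun q hq => Equiv.ofBijective
          (fun i => gE.symm ⟨(q i : Sym2 V), hmemT q hq i⟩)
          ((Finite.injective_iff_bijective).mp (by
            intro a b hab
            have h1 : (⟨(q a : Sym2 V), hmemT q hq a⟩ : T.edgeSet)
                = ⟨(q b : Sym2 V), hmemT q hq b⟩ :=
              (Equiv.apply_symm_apply gE _).symm.trans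
                ((congrArg gE hab).trans (Equiv.apply_symm_apply gE _))
            have h2 : (q a : Sym2 V) = (q b : Sym2 V) :=
              congrArg (fun z : T.edgeSet => (z : Sym2 V)) h1
            exact hqinj q hq (Subtype.ext h2))))
        (j := fun σ _ => g ∘ σ) ?_ ?_ ?_ ?_ ?_
      · exact fun q hq => Finset.mem_univ _
      · intro σ _
        rw [Finset.mem_filter, Finset.mem_filter]
        exact ⟨⟨Finset.mem_univ _, hgood_g σ⟩, hTgg σ⟩
      · intro q hq
        funext i
        have h1 := congrArg Subtype.val
          (Equiv.apply_symm_apply gE ⟨(q i : Sym2 V), hmemT q hq i⟩)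
        exact Subtype.ext h1
      · intro σ _
        apply Equiv.ext
        intro i
        exact (Equiv.symm_apply_eq gE).mpr (Subtype.ext rfl)
      · intro q hq
        have hcomp : (g ∘ fun i => gE.symm ⟨(q i : Sym2 V), hmemT q hq i⟩) = q := by
          funext i
          have h1 := congrArg Subtype.val
            (Equiv.apply_symm_apply gE ⟨(q i : Sym2 V), hmemT q hq i⟩)
          exact Subtype.ext h1
        show _ = (A.submatrix id (g ∘ fun i => gE.symm ⟨(q i : Sym2 V), hmemT q hq i⟩)).det
            * ∏ i, B ((g ∘ fun i => gE.symm ⟨(q i : Sym2 V), hmemT q hq i⟩) i) i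
        rw [hcomp]
    rw [hchange]
    -- now a sum over permutations
    have hstep : ∀ σ : Equiv.Perm {v : V // v ≠ o},
        (A.submatrix id (g ∘ σ)).det * ∏ i, B ((g ∘ σ) i) i
        = (((Equiv.Perm.sign σ : ℤ) : ℝ) * N.det) *
          ((∏ v : {v : V // v ≠ o}, Sym2.lift ⟨c, hc⟩ ((g v : Sym2 V)))
            * ∏ i, N i (σ i)) := by
      intro σ
      have h1 : A.submatrix id (g ∘ σ) = N.submatrix id σ := rfl
      rw [h1, Matrix.det_permute' σ N]
      have h2 : ∀ i, B ((g ∘ σ) i) i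
          = Sym2.lift ⟨c, hc⟩ ((g (σ i) : Sym2 V)) * N i (σ i) := fun i => rfl
      rw [Finset.prod_congr rfl (fun i _ => h2 i), Finset.prod_mul_distrib]
      rw [show (∏ i, Sym2.lift ⟨c, hc⟩ ((g (σ i) : Sym2 V)))
          = ∏ v : {v : V // v ≠ o}, Sym2.lift ⟨c, hc⟩ ((g v : Sym2 V)) from
        Equiv.prod_comp σ (fun v => Sym2.lift ⟨c, hc⟩ ((g v : Sym2 V)))]
      try ring
    rw [Finset.sum_congr rfl (fun σ _ => hstep σ)]
    have hfin : ∑ σ : Equiv.Perm {v : V // v ≠ o},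
        (((Equiv.Perm.sign σ : ℤ) : ℝ) * N.det) *
          ((∏ v : {v : V // v ≠ o}, Sym2.lift ⟨c, hc⟩ ((g v : Sym2 V)))
            * ∏ i, N i (σ i))
        = (N.det * (∏ v : {v : V // v ≠ o}, Sym2.lift ⟨c, hc⟩ ((g v : Sym2 V)))) *
          ∑ σ : Equiv.Perm {v : V // v ≠ o},
            ((Equiv.Perm.sign σ : ℤ) : ℝ) * ∏ i, N i (σ i) := by
      rw [Finset.mul_sum]
      exact Finset.sum_congr rfl (fun σ _ => by ring)
    rw [hfin, MTT.det_apply_col N, ← hW]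
    rw [show (N.det * (∏ v : {v : V // v ≠ o}, Sym2.lift ⟨c, hc⟩ ((g v : Sym2 V)))) * N.det
        = (N.det * N.det) * (∏ v : {v : V // v ≠ o}, Sym2.lift ⟨c, hc⟩ ((g v : Sym2 V)))
        from by ring]
    rw [hdet2, one_mul]
  rw [Finset.sum_congr rfl hinner]
  -- step 4: identify with the tsum over the subtype of spanning trees
  haveI hfin : Fintype {T : SimpleGraph V // T ≤ G ∧ T.IsTree} := Subtype.fintype _
  rw [tsum_fintype]
  exact Finset.sum_subtype treeF (fun T => by rw [htreeF]; simp) (fun T => treeWeight T c hc)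
end
end

section
/- Let G be a finite connected graph on n vertices with vertex degrees d₁, d₂, …, d_n. Then for any index 1 ≤ k ≤ n, the number τ(G) of spanning trees of G satisfies τ(G) ≤ (1/d_k) · ∏_{i=1}^{n} d_i. -/
noncomputable section

set_option linter.unusedSectionVars false
set_option linter.unusedVariables false

section AuxSpanningTree

open SimpleGraph


variable {V : Type*} [DecidableEq V] {T : SimpleGraph V}

/-- parent of v toward root k in a tree -/
noncomputable def par (hT : T.IsTree) (k v : V) : V :=
  ((hT.existsUnique_path v k).exists.choose).getVert 1

lemma par_eq (hT : T.IsTree) (k v : V) (p : T.Walk v k) (hp : p.IsPath) :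
    par hT k v = p.getVert 1 := by
  have h := (hT.existsUnique_path v k)
  have := h.unique h.exists.choose_spec hp
  rw [par, this]

lemma adj_par (hT : T.IsTree) {k v : V} (hv : v ≠ k) : T.Adj v (par hT k v) := by
  obtain ⟨p, hp, -⟩ := hT.existsUnique_path v k
  rw [par_eq hT k v p hp]
  have hlen : 0 < p.length := by
    rcases Nat.eq_zero_or_pos p.length with h0 | h
    · exact absurd (SimpleGraph.Walk.eq_of_length_eq_zero h0) hv
    · exact h
  simpa [SimpleGraph.Walk.getVert_zero] using p.adj_getVert_succ hlen

lemma par_of_adj (hT : T.IsTree) {k a b : V} (hab : T.Adj a b) :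
    (a ≠ k ∧ par hT k a = b) ∨ (b ≠ k ∧ par hT k b = a) := by
  obtain ⟨p, hp, -⟩ := hT.existsUnique_path a k
  by_cases hb : b ∈ p.support
  · -- b on path a→k : parent a = b
    left
    have ha : a ≠ k := by
      rintro rfl
      rw [SimpleGraph.Walk.isPath_iff_eq_nil] at hp
      subst hp
      simp at hb
      exact hab.ne (hb.symm)
    refine ⟨ha, ?_⟩
    rw [par_eq hT k a p hp]
    -- p is not nil; write p = cons h q
    cases p with
    | nil => exact absurd rfl ha
    | cons h q =>
      -- h : T.Adj a c, q : Walk c k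
      rw [SimpleGraph.Walk.cons_isPath_iff] at hp
      obtain ⟨hq, haq⟩ := hp
      simp only [SimpleGraph.Walk.support_cons, List.mem_cons] at hb
      rcases hb with rfl | hb
      · exact absurd rfl hab.ne
      · -- b ∈ q.support; take q' = q.takeUntil b
        have hq' : (SimpleGraph.Walk.cons h (q.takeUntil b hb)).IsPath := by
          rw [SimpleGraph.Walk.cons_isPath_iff]
          exact ⟨hq.takeUntil hb, fun hc => haq (q.support_takeUntil_subset hb hc)⟩
        have hone : (SimpleGraph.Walk.cons hab SimpleGraph.Walk.nil).IsPath := by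
          simp [SimpleGraph.Walk.cons_isPath_iff, hab.ne]
        have := hT.IsAcyclic.path_unique ⟨_, hq'⟩ ⟨_, hone⟩
        have h2 := congrArg (fun w : T.Path a b => (w : T.Walk a b).getVert 1) this
        simpa using h2
  · -- b not on path: parent b = a
    right
    have hb' : (SimpleGraph.Walk.cons hab.symm p).IsPath :=
      (SimpleGraph.Walk.cons_isPath_iff _ _).2 ⟨hp, hb⟩
    have hbk : b ≠ k := fun h => hb (h ▸ p.end_mem_support)
    refine ⟨hbk, ?_⟩
    rw [par_eq hT k b _ hb']
    simp

lemma adj_of_par {T₂ : SimpleGraph V} (hT : T.IsTree) (hT₂ : T₂.IsTree) {k : V}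
    (h : ∀ v, v ≠ k → par hT k v = par hT₂ k v) {a b : V} (hab : T.Adj a b) : T₂.Adj a b := by
  rcases par_of_adj hT (k := k) hab with ⟨ha, hpa⟩ | ⟨hb, hpb⟩
  · have := adj_par hT₂ ha
    rwa [← h a ha, hpa] at this
  · have := adj_par hT₂ hb
    rw [← h b hb, hpb] at this
    exact this.symm

lemma tree_eq_of_par_eq {T₂ : SimpleGraph V} (hT : T.IsTree) (hT₂ : T₂.IsTree) {k : V}
    (h : ∀ v, v ≠ k → par hT k v = par hT₂ k v) : T = T₂ := by
  ext a b
  exact ⟨adj_of_par hT hT₂ h, adj_of_par hT₂ hT (fun v hv => (h v hv).symm)⟩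


end AuxSpanningTree

/-- **Lemma (spanning tree count bound).**  Let `G` be a finite connected graph on `n`
vertices with degrees `d₁, …, d_n`.  Then for any vertex `k`, the number `τ(G)` of spanning
trees of `G` satisfies `τ(G) ≤ (1/d_k) ∏_{i=1}^n d_i`, stated here in the equivalent
denominator-free form `τ(G) · d_k ≤ ∏_{i=1}^n d_i`. -/
theorem spanning_tree_count_le {V : Type*} [Fintype V] [DecidableEq V]
    (G : SimpleGraph V) [DecidableRel G.Adj] (hG : G.Connected) (k : V) :
    Nat.card {T : SimpleGraph V // T ≤ G ∧ T.IsTree} * G.degree k ≤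
      ∏ v : V, G.degree v := by
  have key : Nat.card {T : SimpleGraph V // T ≤ G ∧ T.IsTree} ≤
      ∏ v ∈ Finset.univ.erase k, G.degree v := by
    set F : {T : SimpleGraph V // T ≤ G ∧ T.IsTree} →
        (∀ v : {v : V // v ≠ k}, G.neighborSet v.1) := fun T v =>
      ⟨par T.2.2 k v.1, T.2.1 (adj_par T.2.2 v.2)⟩ with hF
    have hinj : Function.Injective F := by
      intro T₁ T₂ h
      ext1
      refine tree_eq_of_par_eq T₁.2.2 T₂.2.2 (k := k) fun v hv => ?_
      have := congrFun h ⟨v, hv⟩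
      simpa [hF] using congrArg Subtype.val this
    calc Nat.card {T : SimpleGraph V // T ≤ G ∧ T.IsTree}
        ≤ Nat.card (∀ v : {v : V // v ≠ k}, G.neighborSet v.1) :=
          Nat.card_le_card_of_injective F hinj
      _ = ∏ v ∈ Finset.univ.erase k, G.degree v := by
          rw [Nat.card_eq_fintype_card]
          rw [Fintype.card_pi]
          have hps : (∏ v ∈ Finset.univ.erase k, G.degree v)
              = ∏ v : {v : V // v ≠ k}, G.degree v.1 :=
            Finset.prod_subtype (Finset.univ.erase k) (fun x => by simp)
              (fun v => G.degree v)
          rw [hps]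
          exact Fintype.prod_congr _ _ fun v => G.card_neighborSet_eq_degree v.1
  have h2 := Nat.mul_le_mul_right (G.degree k) key
  refine h2.trans_eq ?_
  rw [Nat.mul_comm]
  exact Finset.mul_prod_erase Finset.univ (fun v => G.degree v) (Finset.mem_univ k)
end
end

section
/- Let h, m be positive integers and let I = ({i₁,j₁},…,{i_m,j_m}) ∈ Col^{(h,m)} be any collision pattern. Let 𝒜 := {1 ≤ r ≤ m : p(i_r) = p(j_r)}, ℬ := {1,…,m} ∖ 𝒜, and η := |𝒜| + 2|ℬ|. Let K₁ ≥ K₂ ≥ ⋯ ≥ K_η be the non-increasing arrangement of the multiset {r − p(i_r) : r ∈ 𝒜} ∪ {r − p(i_r) : r ∈ ℬ} ∪ {r − p(j_r) : r ∈ ℬ}. Then ∏_{k=1}^{⌈m/2⌉} K_k ≤ (2h)^{⌈m/2⌉}. -/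
noncomputable section

/-- A collision pattern `I = ({i₁,j₁},…,{i_m,j_m}) ∈ Col^{(h,m)}`, recorded as a `1`-indexed
sequence of ordered pairs `(i_r, j_r)` with `1 ≤ i_r < j_r ≤ h` and no two consecutive pairs
equal; the value is the junk pair `(0,0)` outside `{1,…,m}`. -/
structure CollisionPattern (h m : ℕ) where
  pair : ℕ → ℕ × ℕ
  one_le_fst : ∀ r, 1 ≤ r → r ≤ m → 1 ≤ (pair r).1
  fst_lt_snd : ∀ r, 1 ≤ r → r ≤ m → (pair r).1 < (pair r).2
  snd_le : ∀ r, 1 ≤ r → r ≤ m → (pair r).2 ≤ h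
  ne_succ : ∀ r, 1 ≤ r → r < m → pair r ≠ pair (r + 1)
  eq_zero_outside : ∀ r, r = 0 ∨ m < r → pair r = (0, 0)

/-- `I.parent i r = max {1 ≤ k < r : i ∈ {i_k, j_k}}`, with value `0` if this set is empty. -/
def CollisionPattern.parent {h m : ℕ} (I : CollisionPattern h m) (i r : ℕ) : ℕ :=
  ((Finset.Ico 1 r).filter fun k => (I.pair k).1 = i ∨ (I.pair k).2 = i).sup id

/-- `p(i_r)`. -/
def CollisionPattern.pI {h m : ℕ} (I : CollisionPattern h m) (r : ℕ) : ℕ :=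
  I.parent (I.pair r).1 r

/-- `p(j_r)`. -/
def CollisionPattern.pJ {h m : ℕ} (I : CollisionPattern h m) (r : ℕ) : ℕ :=
  I.parent (I.pair r).2 r

/-- `𝒜 = {1 ≤ r ≤ m : p(i_r) = p(j_r)}`. -/
def CollisionPattern.setA {h m : ℕ} (I : CollisionPattern h m) : Finset ℕ :=
  (Finset.Icc 1 m).filter fun r => I.pI r = I.pJ r

/-- `ℬ = {1,…,m} ∖ 𝒜`. -/
def CollisionPattern.setB {h m : ℕ} (I : CollisionPattern h m) : Finset ℕ :=
  (Finset.Icc 1 m).filter fun r => I.pI r ≠ I.pJ r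

/-- The multiset `{r - p(i_r) : r ∈ 𝒜} ∪ {r - p(i_r) : r ∈ ℬ} ∪ {r - p(j_r) : r ∈ ℬ}`
of gaps, of cardinality `η = |𝒜| + 2|ℬ|`. -/
def CollisionPattern.gapMultiset {h m : ℕ} (I : CollisionPattern h m) : Multiset ℕ :=
  I.setA.val.map (fun r => r - I.pI r) + I.setB.val.map (fun r => r - I.pI r) +
    I.setB.val.map (fun r => r - I.pJ r)


/-- Natural-number AM-GM: smoothing argument. -/
lemma nat_amgm_aux (c : ℕ) : ∀ (k : ℕ) (s : Multiset ℕ),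
    (s.map (fun z => z - c)).sum ≤ k → s.sum ≤ c * Multiset.card s →
    s.prod ≤ c ^ Multiset.card s := by
  intro k
  induction k with
  | zero =>
    intro s hk _
    have hall : ∀ x ∈ s, x ≤ c := by
      intro x hx
      have h2 := Multiset.single_le_sum (fun y _ => Nat.zero_le y)
        (x - c) (Multiset.mem_map_of_mem (fun z => z - c) hx)
      omega
    exact Multiset.prod_le_pow_card s c hall
  | succ n ih =>
    intro s hk hsum
    by_cases hall : ∀ x ∈ s, x ≤ c
    · exact Multiset.prod_le_pow_card s c hall
    · push_neg at hall
      obtain ⟨x, hx, hxc⟩ := hall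
      have hy : ∃ y ∈ s, y < c := by
        by_contra hy
        push_neg at hy
        have h1 : ∀ z ∈ s.erase x, c ≤ z := fun z hz => hy z (Multiset.mem_of_mem_erase hz)
        have h2 : Multiset.card (s.erase x) • c ≤ (s.erase x).sum :=
          Multiset.card_nsmul_le_sum h1
        have h3 : s.sum = x + (s.erase x).sum := by
          conv_lhs => rw [← Multiset.cons_erase hx]
          simp
        have h4 : Multiset.card s = Multiset.card (s.erase x) + 1 := by
          conv_lhs => rw [← Multiset.cons_erase hx]
          simp
        rw [h3, h4] at hsum
        simp [smul_eq_mul] at h2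
        nlinarith
      obtain ⟨y, hy, hyc⟩ := hy
      have hxy : y ∈ s.erase x := (Multiset.mem_erase_of_ne (by omega)).mpr hy
      set t := (s.erase x).erase y with ht
      have hs : s = x ::ₘ y ::ₘ t := by
        rw [ht, Multiset.cons_erase hxy, Multiset.cons_erase hx]
      set s' : Multiset ℕ := (x - 1) ::ₘ (y + 1) ::ₘ t with hs'
      have hcard : Multiset.card s' = Multiset.card s := by
        rw [hs, hs']; simp
      have hsum' : s'.sum = s.sum := by
        rw [hs, hs']; simp [Multiset.sum_cons]; omega
      have hmap : (s'.map (fun z => z - c)).sum ≤ n := by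
        rw [hs] at hk
        rw [hs']
        simp only [Multiset.map_cons, Multiset.sum_cons] at hk ⊢
        omega
      have hmain := ih s' hmap (by rw [hsum', hcard]; exact hsum)
      rw [hcard] at hmain
      refine le_trans ?_ hmain
      rw [hs, hs']
      simp only [Multiset.prod_cons]
      have hmul : x * y ≤ (x - 1) * (y + 1) := by
        obtain ⟨a, rfl⟩ : ∃ a, x = a + 1 := ⟨x - 1, by omega⟩
        simp only [Nat.add_sub_cancel]
        nlinarith
      calc x * (y * t.prod) = (x * y) * t.prod := by ring
        _ ≤ ((x - 1) * (y + 1)) * t.prod := Nat.mul_le_mul_right _ hmul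
        _ = (x - 1) * ((y + 1) * t.prod) := by ring

lemma nat_amgm (c : ℕ) (s : Multiset ℕ) (h : s.sum ≤ c * Multiset.card s) :
    s.prod ≤ c ^ Multiset.card s :=
  nat_amgm_aux c _ s le_rfl h

-- occurrence set of index i
def CollisionPattern.occ {h m : ℕ} (I : CollisionPattern h m) (i : ℕ) : Finset ℕ :=
  (Finset.Icc 1 m).filter fun r => (I.pair r).1 = i ∨ (I.pair r).2 = i

lemma parent_lt {h m : ℕ} (I : CollisionPattern h m) (i r : ℕ) (hr : 1 ≤ r) :
    I.parent i r < r := by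
  unfold CollisionPattern.parent
  rw [Finset.sup_lt_iff (by simp; omega : (⊥ : ℕ) < r)]
  intro b hb
  simp only [Finset.mem_filter, Finset.mem_Ico] at hb
  exact hb.1.2

lemma le_parent {h m : ℕ} (I : CollisionPattern h m) (i k r : ℕ) (hk1 : 1 ≤ k) (hkr : k < r)
    (hocc : (I.pair k).1 = i ∨ (I.pair k).2 = i) : k ≤ I.parent i r := by
  apply Finset.le_sup (f := id)
  simp only [Finset.mem_filter, Finset.mem_Ico]
  exact ⟨⟨hk1, hkr⟩, hocc⟩

/-- per-index telescoping bound -/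
lemma occ_sum_le {h m : ℕ} (I : CollisionPattern h m) (i : ℕ) :
    ∑ r ∈ I.occ i, (r - I.parent i r) ≤ m := by
  have key : ∀ r ∈ I.occ i, (r - I.parent i r) = (Finset.Ioc (I.parent i r) r).card := by
    intro r _; rw [Nat.card_Ioc]
  rw [Finset.sum_congr rfl key]
  have hdisj : ∀ r ∈ I.occ i, ∀ r' ∈ I.occ i, r ≠ r' →
      Disjoint (Finset.Ioc (I.parent i r) r) (Finset.Ioc (I.parent i r') r') := by
    have main : ∀ r ∈ I.occ i, ∀ r' ∈ I.occ i, r < r' →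
        Disjoint (Finset.Ioc (I.parent i r) r) (Finset.Ioc (I.parent i r') r') := by
      intro r hr r' hr' hlt
      simp only [CollisionPattern.occ, Finset.mem_filter, Finset.mem_Icc] at hr hr'
      have hle : r ≤ I.parent i r' := le_parent I i r r' hr.1.1 hlt hr.2
      rw [Finset.disjoint_left]
      intro a ha ha'
      simp only [Finset.mem_Ioc] at ha ha'
      omega
    intro r hr r' hr' hne
    rcases lt_or_gt_of_ne hne with h1 | h1
    · exact main r hr r' hr' h1
    · exact (main r' hr' r hr h1).symm
  rw [← Finset.card_biUnion hdisj]
  have hsub : (I.occ i).biUnion (fun r => Finset.Ioc (I.parent i r) r) ⊆ Finset.Icc 1 m := by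
    intro a ha
    simp only [Finset.mem_biUnion, Finset.mem_Ioc, CollisionPattern.occ, Finset.mem_filter,
      Finset.mem_Icc] at ha
    obtain ⟨r, ⟨⟨hr1, hrm⟩, _⟩, ha1, ha2⟩ := ha
    simp only [Finset.mem_Icc]
    omega
  calc ((I.occ i).biUnion fun r => Finset.Ioc (I.parent i r) r).card
      ≤ (Finset.Icc 1 m).card := Finset.card_le_card hsub
    _ = m := by rw [Nat.card_Icc]; omega

/-- total sum bound -/
lemma total_sum_le {h m : ℕ} (I : CollisionPattern h m) :
    ∑ r ∈ Finset.Icc 1 m, ((r - I.parent (I.pair r).1 r) + (r - I.parent (I.pair r).2 r))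
      ≤ h * m := by
  have swap : ∑ r ∈ Finset.Icc 1 m,
        ((r - I.parent (I.pair r).1 r) + (r - I.parent (I.pair r).2 r))
      = ∑ i ∈ Finset.Icc 1 h, ∑ r ∈ I.occ i, (r - I.parent i r) := by
    have rhs : ∀ i, ∑ r ∈ I.occ i, (r - I.parent i r)
        = ∑ r ∈ Finset.Icc 1 m,
            if (I.pair r).1 = i ∨ (I.pair r).2 = i then r - I.parent i r else 0 := by
      intro i
      rw [CollisionPattern.occ, Finset.sum_filter]
    rw [Finset.sum_congr rfl fun i _ => rhs i, Finset.sum_comm]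
    apply Finset.sum_congr rfl
    intro r hr
    simp only [Finset.mem_Icc] at hr
    rw [← Finset.sum_filter]
    have hfilt : (Finset.Icc 1 h).filter (fun i => (I.pair r).1 = i ∨ (I.pair r).2 = i)
        = {(I.pair r).1, (I.pair r).2} := by
      ext i
      simp only [Finset.mem_filter, Finset.mem_Icc, Finset.mem_insert, Finset.mem_singleton]
      constructor
      · rintro ⟨_, h1 | h1⟩
        · left; omega
        · right; omega
      · rintro (rfl | rfl)
        · have h1 := I.one_le_fst r hr.1 hr.2
          have h2 := I.fst_lt_snd r hr.1 hr.2
          have h3 := I.snd_le r hr.1 hr.2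
          exact ⟨⟨h1, by omega⟩, Or.inl rfl⟩
        · have h1 := I.one_le_fst r hr.1 hr.2
          have h2 := I.fst_lt_snd r hr.1 hr.2
          have h3 := I.snd_le r hr.1 hr.2
          exact ⟨⟨by omega, h3⟩, Or.inr rfl⟩
    rw [hfilt]
    rw [Finset.sum_pair (by
      have h2 := I.fst_lt_snd r hr.1 hr.2
      omega)]
  rw [swap]
  calc ∑ i ∈ Finset.Icc 1 h, ∑ r ∈ I.occ i, (r - I.parent i r)
      ≤ ∑ _i ∈ Finset.Icc 1 h, m := Finset.sum_le_sum fun i _ => occ_sum_le I i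
    _ = h * m := by simp [Nat.card_Icc, mul_comm]

lemma gap_sum_le {h m : ℕ} (I : CollisionPattern h m) : I.gapMultiset.sum ≤ h * m := by
  have hsum : I.gapMultiset.sum = (∑ r ∈ I.setA, (r - I.pI r)) + (∑ r ∈ I.setB, (r - I.pI r))
      + (∑ r ∈ I.setB, (r - I.pJ r)) := by
    simp only [CollisionPattern.gapMultiset, Multiset.sum_add, Finset.sum_eq_multiset_sum]
  have hAB : (∑ r ∈ I.setA, (r - I.pI r)) + (∑ r ∈ I.setB, (r - I.pI r))
      = ∑ r ∈ Finset.Icc 1 m, (r - I.pI r) :=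
    Finset.sum_filter_add_sum_filter_not (Finset.Icc 1 m) (fun r => I.pI r = I.pJ r) _
  have hB : (∑ r ∈ I.setB, (r - I.pJ r)) ≤ ∑ r ∈ Finset.Icc 1 m, (r - I.pJ r) :=
    Finset.sum_le_sum_of_subset (Finset.filter_subset _ _)
  calc I.gapMultiset.sum
      ≤ (∑ r ∈ Finset.Icc 1 m, (r - I.pI r)) + (∑ r ∈ Finset.Icc 1 m, (r - I.pJ r)) := by
        rw [hsum, hAB]; omega
    _ = ∑ r ∈ Finset.Icc 1 m,
          ((r - I.parent (I.pair r).1 r) + (r - I.parent (I.pair r).2 r)) :=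
        (Finset.sum_add_distrib).symm
    _ ≤ h * m := total_sum_le I

lemma gap_card_ge {h m : ℕ} (I : CollisionPattern h m) : m ≤ Multiset.card I.gapMultiset := by
  have h1 : I.setA.card + I.setB.card = m := by
    have := Finset.card_filter_add_card_filter_not (s := Finset.Icc 1 m)
      (p := fun r => I.pI r = I.pJ r)
    simpa [CollisionPattern.setA, CollisionPattern.setB, Nat.card_Icc] using this
  have h2 : Multiset.card I.gapMultiset = I.setA.card + I.setB.card + I.setB.card := by
    simp only [CollisionPattern.gapMultiset, Multiset.card_add, Multiset.card_map, Finset.card_def]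
  omega

/-- **Lemma (gap product bound).**  For any collision pattern `I ∈ Col^{(h,m)}`, if
`K₁ ≥ K₂ ≥ ⋯ ≥ K_η` is the non-increasing arrangement of the gap multiset (realized here by
sorting in increasing order, reversing, and taking the first `⌈m/2⌉` entries, i.e. the
`⌈m/2⌉` largest ones), then `∏_{k=1}^{⌈m/2⌉} K_k ≤ (2h)^{⌈m/2⌉}`. -/
theorem gap_product_bound (h m : ℕ) (hh : 0 < h) (hm : 0 < m)
    (I : CollisionPattern h m) :
    (((I.gapMultiset.sort (· ≤ ·)).reverse.take ((m + 1) / 2)).prod : ℕ) ≤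
      (2 * h) ^ ((m + 1) / 2) := by

  set n := (m + 1) / 2 with hn
  set L := (I.gapMultiset.sort (· ≤ ·)).reverse with hL
  have hLlen : L.length = Multiset.card I.gapMultiset := by
    rw [hL, List.length_reverse, Multiset.length_sort]
  have hLsum : L.sum = I.gapMultiset.sum := by
    rw [hL, List.sum_reverse]
    conv_rhs => rw [← Multiset.sort_eq (s := I.gapMultiset) (r := (· ≤ ·))]
    rfl
  have hnm : n ≤ m := by omega
  have hlen : (L.take n).length = n := by
    rw [List.length_take, hLlen]
    have := gap_card_ge I
    omega
  have htsum : (L.take n).sum ≤ I.gapMultiset.sum := by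
    rw [← hLsum]
    conv_rhs => rw [← List.take_append_drop n L]
    rw [List.sum_append]
    omega
  have hsum2 : (L.take n).sum ≤ 2 * h * n := by
    have h1 : I.gapMultiset.sum ≤ h * m := gap_sum_le I
    have h2 : m ≤ 2 * n := by omega
    calc (L.take n).sum ≤ h * m := le_trans htsum h1
      _ ≤ h * (2 * n) := Nat.mul_le_mul_left h h2
      _ = 2 * h * n := by ring
  have := nat_amgm (2 * h) (↑(L.take n)) (by
    simpa [hlen] using hsum2)
  simpa [hlen] using this
end
end

section
/- Let h be a positive integer, z₁,…,z_h ∈ ℝ², and let G = (V,E) be a finite connected graph with a boundary ∂V = {w₁,…,w_h} ⊆ V of h distinct vertices and with non-negative conductances (c_{uv})_{{u,v}∈E}. For α > 0, setting the boundary values φ_{w_i}^{(α)} := α z_i for i = 1,…,h, the integral ∫_{(ℝ²)^{V∖∂V}} exp( − Σ_{{u,v}∈E} c_{uv} |φ_u^{(α)} − φ_v^{(α)}|² ) ∏_{v∈V∖∂V} dφ_v^{(α)} is non-increasing in α on (0,∞). -/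
noncomputable section

open MeasureTheory

open scoped Classical

/-- The plane `ℝ²`. -/
abbrev Plane : Type := EuclideanSpace ℝ (Fin 2)

/-- Extend a field `φ` defined on the interior `V ∖ ∂V` (with `∂V` the range of the boundary
labelling `w : Fin h → V`) by the prescribed boundary values `bv i` at `w i`. -/
def extendField {V : Type*} {h : ℕ} (w : Fin h → V) (bv : Fin h → Plane)
    (φ : {v : V // v ∉ Set.range w} → Plane) (v : V) : Plane :=
  if hv : v ∈ Set.range w then bv hv.choose else φ ⟨v, hv⟩

namespace GFFaux

variable {V : Type*} [Fintype V] [DecidableEq V] {h : ℕ}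

/-- extension of an interior field by zero, as a linear map -/
def AL (w : Fin h → V) : ({v : V // v ∉ Set.range w} → Plane) →ₗ[ℝ] (V → Plane) where
  toFun φ v := if hv : v ∈ Set.range w then 0 else φ ⟨v, hv⟩
  map_add' φ ψ := by
    funext v
    by_cases hv : v ∈ Set.range w
    · simp only [Pi.add_apply, dif_pos hv]; simp
    · simp only [Pi.add_apply, dif_neg hv]
  map_smul' r φ := by
    funext v
    by_cases hv : v ∈ Set.range w
    · simp only [Pi.smul_apply, dif_pos hv, RingHom.id_apply]; simp
    · simp only [Pi.smul_apply, dif_neg hv, RingHom.id_apply]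

/-- boundary field -/
def bV (w : Fin h → V) (z : Fin h → Plane) : V → Plane :=
  fun v => if hv : v ∈ Set.range w then z hv.choose else 0

lemma extendField_eq (w : Fin h → V) (z : Fin h → Plane) (α : ℝ)
    (φ : {v : V // v ∉ Set.range w} → Plane) (v : V) :
    extendField w (fun i => α • z i) φ v = AL w φ v + α • bV w z v := by
  by_cases hv : v ∈ Set.range w
  · simp only [extendField, AL, bV, LinearMap.coe_mk, AddHom.coe_mk, dif_pos hv]; simp
  · simp only [extendField, AL, bV, LinearMap.coe_mk, AddHom.coe_mk, dif_neg hv]; simp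

variable (G : SimpleGraph V) [DecidableRel G.Adj]

abbrev Yp (V : Type*) [Fintype V] : Type _ := PiLp 2 (fun _ : V × V => Plane)

def ML (c : V → V → ℝ) (w : Fin h → V) :
    ({v : V // v ∉ Set.range w} → Plane) →ₗ[ℝ] Yp V where
  toFun φ := WithLp.toLp 2 (fun p : V × V =>
    Real.sqrt (if G.Adj p.1 p.2 then c p.1 p.2 else 0) • (AL w φ p.1 - AL w φ p.2))
  map_add' φ ψ := by
    refine PiLp.ext fun p => ?_
    simp only [PiLp.toLp_apply, map_add, Pi.add_apply, PiLp.add_apply, smul_sub, smul_add]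
    abel
  map_smul' r φ := by
    refine PiLp.ext fun p => ?_
    simp only [PiLp.toLp_apply, LinearMap.map_smul, Pi.smul_apply, RingHom.id_apply,
      PiLp.smul_apply]
    rw [← smul_sub, smul_comm]

def dV (c : V → V → ℝ) (w : Fin h → V) (z : Fin h → Plane) : Yp V :=
  WithLp.toLp 2 (fun p : V × V =>
    Real.sqrt (if G.Adj p.1 p.2 then c p.1 p.2 else 0) • (bV w z p.1 - bV w z p.2))

/-- the energy identity -/
lemma energy_eq (c : V → V → ℝ) (hnonneg : ∀ u v, G.Adj u v → 0 ≤ c u v)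
    (w : Fin h → V) (z : Fin h → Plane) (α : ℝ)
    (φ : {v : V // v ∉ Set.range w} → Plane) :
    (∑ u : V, ∑ v : V, if G.Adj u v then
        c u v * ‖extendField w (fun i => α • z i) φ u -
          extendField w (fun i => α • z i) φ v‖ ^ 2 else 0)
      = ‖ML G c w φ + α • dV G c w z‖ ^ 2 := by
  rw [PiLp.norm_sq_eq_of_L2, Fintype.sum_prod_type]
  refine Finset.sum_congr rfl fun u _ => Finset.sum_congr rfl fun v _ => ?_
  have hcc : (0:ℝ) ≤ (if G.Adj u v then c u v else 0) := by
    split_ifs with hA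
    · exact hnonneg u v hA
    · exact le_rfl
  have key : (ML G c w φ + α • dV G c w z) (u, v)
      = Real.sqrt (if G.Adj u v then c u v else 0) •
        (extendField w (fun i => α • z i) φ u - extendField w (fun i => α • z i) φ v) := by
    simp only [PiLp.add_apply, PiLp.smul_apply, ML, dV, LinearMap.coe_mk, AddHom.coe_mk,
      PiLp.toLp_apply]
    simp only [extendField_eq]
    module
  rw [key, norm_smul, mul_pow, Real.norm_eq_abs, abs_of_nonneg (Real.sqrt_nonneg _),
    Real.sq_sqrt hcc]
  split_ifs with hA
  · rfl
  · simp

end GFFaux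

set_option maxHeartbeats 1000000 in
set_option synthInstance.maxHeartbeats 200000 in
/-- **Claim (monotonicity of the pinned GFF partition function under boundary dilation).**
For a finite connected graph `G = (V,E)` with boundary `∂V = {w₁,…,w_h}` and non-negative
conductances, with boundary values `φ_{w_i} = α z_i`, the integral
`∫_{(ℝ²)^{V∖∂V}} exp(-Σ_{{u,v}∈E} c_{uv} |φ_u - φ_v|²) ∏ dφ_v`
is non-increasing in `α` on `(0,∞)`.  The sum over unordered edges is written as half of the
sum over ordered adjacent pairs. -/
theorem gff_boundary_dilation_antitone {V : Type*} [Fintype V] [DecidableEq V]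
    (G : SimpleGraph V) [DecidableRel G.Adj] (hG : G.Connected)
    (c : V → V → ℝ) (hc : ∀ u v, c u v = c v u)
    (hnonneg : ∀ u v, G.Adj u v → 0 ≤ c u v)
    (h : ℕ) (hh : 0 < h) (z : Fin h → Plane)
    (w : Fin h → V) (hw : Function.Injective w) :
    AntitoneOn (fun α : ℝ =>
      ∫ φ : ({v : V // v ∉ Set.range w} → Plane),
        Real.exp (-((∑ u : V, ∑ v : V, if G.Adj u v then
          c u v * ‖extendField w (fun i => α • z i) φ u -
            extendField w (fun i => α • z i) φ v‖ ^ 2 else 0) / 2)))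
      (Set.Ioi 0) := by
  classical
  set X := ({v : V // v ∉ Set.range w} → Plane) with hX
  let M := GFFaux.ML G c w
  let d := GFFaux.dV G c w z
  let K : Submodule ℝ (GFFaux.Yp V) := LinearMap.range M
  obtain ⟨m, hm⟩ : ∃ m, M m = (K.orthogonalProjectionOnto (-d) : GFFaux.Yp V) :=
    (K.orthogonalProjectionOnto (-d)).2
  have horth : ∀ ψ : X, (inner ℝ (M ψ) (M m + d) : ℝ) = 0 := by
    intro ψ
    have h1 : -d - (K.orthogonalProjectionOnto (-d) : GFFaux.Yp V) ∈ Kᗮ :=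
      K.sub_starProjection_mem_orthogonal (-d)
    have h2 : M m + d ∈ Kᗮ := by
      have := Kᗮ.neg_mem h1
      have heq : -(-d - (K.orthogonalProjectionOnto (-d) : GFFaux.Yp V)) = M m + d := by
        rw [hm]; abel
      rwa [heq] at this
    exact (Submodule.mem_orthogonal K _).1 h2 (M ψ) (LinearMap.mem_range_self M ψ)
  set c₀ : ℝ := ‖M m + d‖ ^ 2 with hc₀def
  have hc₀ : 0 ≤ c₀ := sq_nonneg _
  have hEnergy : ∀ (α : ℝ) (φ : X),
      (∑ u : V, ∑ v : V, if G.Adj u v then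
          c u v * ‖extendField w (fun i => α • z i) φ u -
            extendField w (fun i => α • z i) φ v‖ ^ 2 else 0)
        = ‖M (φ - α • m)‖ ^ 2 + α ^ 2 * c₀ := by
    intro α φ
    rw [GFFaux.energy_eq G c hnonneg w z α φ]
    have hsplit : M φ + α • d = M (φ - α • m) + α • (M m + d) := by
      rw [map_sub, LinearMap.map_smul, smul_add]; abel
    rw [hsplit, norm_add_sq_real, real_inner_smul_right, horth, norm_smul, mul_pow,
      Real.norm_eq_abs, sq_abs]
    ring
  set I : ENNReal := ∫⁻ φ : X, ENNReal.ofReal (Real.exp (-(‖M φ‖ ^ 2 / 2))) with hIdef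
  haveI : ContinuousSMul ℝ (GFFaux.Yp V) := IsBoundedSMul.continuousSMul
  have hcontM : Continuous (fun φ : X => M φ) := M.continuous_of_finiteDimensional
  have hZ : ∀ α : ℝ,
      (∫ φ : X, Real.exp (-((∑ u : V, ∑ v : V, if G.Adj u v then
          c u v * ‖extendField w (fun i => α • z i) φ u -
            extendField w (fun i => α • z i) φ v‖ ^ 2 else 0) / 2)))
        = Real.exp (-(α ^ 2 * c₀ / 2)) * I.toReal := by
    intro α
    have hrw : ∀ φ : X,
        Real.exp (-((∑ u : V, ∑ v : V, if G.Adj u v then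
          c u v * ‖extendField w (fun i => α • z i) φ u -
            extendField w (fun i => α • z i) φ v‖ ^ 2 else 0) / 2))
        = Real.exp (-(α ^ 2 * c₀ / 2)) * Real.exp (-(‖M (φ - α • m)‖ ^ 2 / 2)) := by
      intro φ
      rw [hEnergy α φ, ← Real.exp_add]
      ring_nf
    rw [integral_congr_ae (Filter.EventuallyEq.of_eq (funext hrw))]
    have hcont2 : Continuous (fun φ : X =>
        Real.exp (-(α ^ 2 * c₀ / 2)) * Real.exp (-(‖M (φ - α • m)‖ ^ 2 / 2))) := by
      fun_prop
    rw [integral_eq_lintegral_of_nonneg_ae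
        (Filter.Eventually.of_forall fun φ => by positivity) hcont2.aestronglyMeasurable]
    have hlrw : ∀ φ : X,
        ENNReal.ofReal (Real.exp (-(α ^ 2 * c₀ / 2)) * Real.exp (-(‖M (φ - α • m)‖ ^ 2 / 2)))
        = ENNReal.ofReal (Real.exp (-(α ^ 2 * c₀ / 2))) *
            ENNReal.ofReal (Real.exp (-(‖M (φ - α • m)‖ ^ 2 / 2))) :=
      fun φ => ENNReal.ofReal_mul (Real.exp_nonneg _)
    simp only [hlrw]
    rw [lintegral_const_mul' _ _ ENNReal.ofReal_ne_top]
    have htrans : (∫⁻ φ : X, ENNReal.ofReal (Real.exp (-(‖M (φ - α • m)‖ ^ 2 / 2))))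
        = I := by
      rw [hIdef]
      exact lintegral_sub_right_eq_self
        (fun φ : X => ENNReal.ofReal (Real.exp (-(‖M φ‖ ^ 2 / 2)))) (α • m)
    rw [htrans, ENNReal.toReal_mul, ENNReal.toReal_ofReal (Real.exp_nonneg _)]
  intro a ha b hb hab
  simp only
  rw [hZ a, hZ b]
  apply mul_le_mul_of_nonneg_right _ ENNReal.toReal_nonneg
  apply Real.exp_le_exp.mpr
  have ha' : (0:ℝ) < a := ha
  have hsq : a ^ 2 ≤ b ^ 2 := pow_le_pow_left₀ (le_of_lt ha') hab 2
  nlinarith [mul_le_mul_of_nonneg_right hsq hc₀]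
end
end

section
/- Let c > 0 and let X be a non-negative random variable on a probability space such that E[X^h] ≤ exp(exp(c h²)) for every positive integer h. Then for every real t > e^e, P(X ≥ t) ≤ t^{1 − ⌊√(log log t / c)⌋}. In particular, P(X ≥ t) ≤ exp( −((1+o(1))/√c) · log t · √(log log t) ) as t → ∞. -/
noncomputable section

open MeasureTheory

private lemma key_markov_bound {Ω : Type*} [MeasurableSpace Ω]
    (P : Measure Ω) [IsProbabilityMeasure P]
    (X : Ω → ℝ) (hX : Measurable X) (hXnn : ∀ ω, 0 ≤ X ω)
    (c : ℝ) (hc : 0 < c)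
    (hmom : ∀ h : ℕ, 1 ≤ h →
      ∫⁻ ω, ENNReal.ofReal (X ω ^ h) ∂P ≤
        ENNReal.ofReal (Real.exp (Real.exp (c * (h : ℝ) ^ 2))))
    (t : ℝ) (ht : Real.exp (Real.exp 1) < t)
    (n : ℕ) (hn : 1 ≤ n) (hcn : c * (n : ℝ) ^ 2 ≤ Real.log (Real.log t)) :
    P {ω | t ≤ X ω} ≤ ENNReal.ofReal (t ^ ((1 : ℤ) - n)) := by
  have h1t : (1 : ℝ) < t := by
    have : (1 : ℝ) < Real.exp (Real.exp 1) := Real.one_lt_exp_iff.mpr (Real.exp_pos 1)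
    linarith
  have ht0 : (0 : ℝ) < t := by linarith
  have htn : (0 : ℝ) < t ^ n := pow_pos ht0 n
  have hlogt : (0 : ℝ) < Real.log t := Real.log_pos h1t
  -- exp (exp (c n^2)) ≤ t
  have hexp : Real.exp (Real.exp (c * (n : ℝ) ^ 2)) ≤ t := by
    have h1 : Real.exp (c * (n : ℝ) ^ 2) ≤ Real.exp (Real.log (Real.log t)) :=
      Real.exp_le_exp.mpr hcn
    rw [Real.exp_log hlogt] at h1
    calc Real.exp (Real.exp (c * (n : ℝ) ^ 2)) ≤ Real.exp (Real.log t) :=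
          Real.exp_le_exp.mpr h1
      _ = t := Real.exp_log ht0
  -- Markov's inequality
  have hsub : {ω | t ≤ X ω} ⊆
      {ω | ENNReal.ofReal (t ^ n) ≤ ENNReal.ofReal (X ω ^ n)} := by
    intro ω hω
    exact ENNReal.ofReal_le_ofReal (pow_le_pow_left₀ ht0.le hω n)
  have hmeas : AEMeasurable (fun ω => ENNReal.ofReal (X ω ^ n)) P :=
    (ENNReal.measurable_ofReal.comp ((hX.pow_const n))).aemeasurable
  have hmarkov := MeasureTheory.meas_ge_le_lintegral_div hmeas
    (ε := ENNReal.ofReal (t ^ n))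
    (by simp [ENNReal.ofReal_eq_zero, not_le, htn]) ENNReal.ofReal_ne_top
  calc P {ω | t ≤ X ω} ≤ P {ω | ENNReal.ofReal (t ^ n) ≤ ENNReal.ofReal (X ω ^ n)} :=
        measure_mono hsub
    _ ≤ (∫⁻ ω, ENNReal.ofReal (X ω ^ n) ∂P) / ENNReal.ofReal (t ^ n) := hmarkov
    _ ≤ ENNReal.ofReal (Real.exp (Real.exp (c * (n : ℝ) ^ 2))) / ENNReal.ofReal (t ^ n) := by
        gcongr
        exact hmom n hn
    _ ≤ ENNReal.ofReal t / ENNReal.ofReal (t ^ n) := by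
        exact ENNReal.div_le_div_right (ENNReal.ofReal_le_ofReal hexp) _
    _ = ENNReal.ofReal (t / t ^ n) := (ENNReal.ofReal_div_of_pos htn).symm
    _ = ENNReal.ofReal (t ^ ((1 : ℤ) - n)) := by
        rw [zpow_sub₀ (ne_of_gt ht0), zpow_one, zpow_natCast]

/-- **Tail upper bound from doubly exponential moment growth.**  If `X ≥ 0` satisfies
`E[X^h] ≤ exp(exp(c h²))` for every positive integer `h`, then for every `t > e^e`,
`P(X ≥ t) ≤ t^{1 - ⌊√(log log t / c)⌋}`; in particular, for every `ε > 0`, eventually in `t`,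
`P(X ≥ t) ≤ exp(-((1-ε)/√c) · log t · √(log log t))`. -/
theorem tail_upper_bound_from_moments {Ω : Type*} [MeasurableSpace Ω]
    (P : Measure Ω) [IsProbabilityMeasure P]
    (X : Ω → ℝ) (hX : Measurable X) (hXnn : ∀ ω, 0 ≤ X ω)
    (c : ℝ) (hc : 0 < c)
    (hmom : ∀ h : ℕ, 1 ≤ h →
      ∫⁻ ω, ENNReal.ofReal (X ω ^ h) ∂P ≤
        ENNReal.ofReal (Real.exp (Real.exp (c * (h : ℝ) ^ 2)))) :
    (∀ t : ℝ, Real.exp (Real.exp 1) < t →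
      P {ω | t ≤ X ω} ≤
        ENNReal.ofReal (t ^ ((1 : ℤ) - ⌊Real.sqrt (Real.log (Real.log t) / c)⌋))) ∧
    (∀ ε : ℝ, 0 < ε → ∃ t₀ : ℝ, ∀ t : ℝ, t₀ ≤ t →
      P {ω | t ≤ X ω} ≤
        ENNReal.ofReal (Real.exp (-((1 - ε) / Real.sqrt c) * Real.log t *
          Real.sqrt (Real.log (Real.log t))))) := by
  have hfirst : ∀ t : ℝ, Real.exp (Real.exp 1) < t →
      P {ω | t ≤ X ω} ≤
        ENNReal.ofReal (t ^ ((1 : ℤ) - ⌊Real.sqrt (Real.log (Real.log t) / c)⌋)) := by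
    intro t ht
    have h1t : (1 : ℝ) < t := by
      have : (1 : ℝ) < Real.exp (Real.exp 1) :=
        Real.one_lt_exp_iff.mpr (Real.exp_pos 1)
      linarith
    have ht0 : (0 : ℝ) < t := by linarith
    have hllt : (0 : ℝ) < Real.log (Real.log t) := by
      have h1 : Real.exp 1 < Real.log t := by
        have := Real.log_lt_log (Real.exp_pos (Real.exp 1)) ht
        rwa [Real.log_exp] at this
      have h2 : (1 : ℝ) < Real.log t := lt_trans (by linarith [Real.add_one_le_exp 1]) h1
      exact Real.log_pos h2
    set x := Real.sqrt (Real.log (Real.log t) / c) with hx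
    have hx0 : 0 ≤ x := Real.sqrt_nonneg _
    have hk0 : (0 : ℤ) ≤ ⌊x⌋ := Int.floor_nonneg.mpr hx0
    rcases eq_or_lt_of_le hk0 with hk | hk
    · -- floor = 0: bound is t^1 = t ≥ 1 ≥ P
      rw [← hk]
      simp only [sub_zero, zpow_one]
      calc P {ω | t ≤ X ω} ≤ 1 := prob_le_one
        _ ≤ ENNReal.ofReal t := by
            rw [← ENNReal.ofReal_one]
            exact ENNReal.ofReal_le_ofReal h1t.le
    · -- floor ≥ 1
      have hk1 : (1 : ℤ) ≤ ⌊x⌋ := hk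
      set n : ℕ := ⌊x⌋.toNat with hn
      have hnk : (n : ℤ) = ⌊x⌋ := Int.toNat_of_nonneg hk0
      have hn1 : 1 ≤ n := by omega
      have hnx : (n : ℝ) ≤ x := by
        have := Int.floor_le x
        rw [← hnk] at this
        exact_mod_cast this
      have hsq : x ^ 2 = Real.log (Real.log t) / c :=
        Real.sq_sqrt (by positivity)
      have hcn : c * (n : ℝ) ^ 2 ≤ Real.log (Real.log t) := by
        have hn2 : (n : ℝ) ^ 2 ≤ Real.log (Real.log t) / c := by
          calc (n : ℝ) ^ 2 ≤ x ^ 2 := by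
                apply pow_le_pow_left₀ (by positivity) hnx
            _ = _ := hsq
        calc c * (n : ℝ) ^ 2 ≤ c * (Real.log (Real.log t) / c) := by
              exact mul_le_mul_of_nonneg_left hn2 hc.le
          _ = Real.log (Real.log t) := by field_simp
      have := key_markov_bound P X hX hXnn c hc hmom t ht n hn1 hcn
      rwa [show ((1 : ℤ) - n : ℤ) = (1 : ℤ) - ⌊x⌋ by rw [hnk]] at this
  constructor
  · exact hfirst
  · intro ε hε
    set M : ℝ := max (max 1 (4 * c)) (4 * c / ε ^ 2) with hM
    refine ⟨Real.exp (Real.exp M) + 1, fun t htt => ?_⟩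
    have hM1 : (1 : ℝ) ≤ M := le_trans (le_max_left 1 (4 * c)) (le_max_left _ _)
    have htgt : Real.exp (Real.exp 1) < t := by
      have h1 : Real.exp (Real.exp 1) ≤ Real.exp (Real.exp M) :=
        Real.exp_le_exp.mpr (Real.exp_le_exp.mpr hM1)
      linarith
    have h1t : (1 : ℝ) < t := by
      have : (1 : ℝ) < Real.exp (Real.exp 1) :=
        Real.one_lt_exp_iff.mpr (Real.exp_pos 1)
      linarith
    have ht0 : (0 : ℝ) < t := by linarith
    have hlogt : (0 : ℝ) < Real.log t := Real.log_pos h1t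
    have hMll : M ≤ Real.log (Real.log t) := by
      have h1 : Real.exp (Real.exp M) < t := by linarith
      have h2 : Real.exp M < Real.log t := by
        have := Real.log_lt_log (Real.exp_pos (Real.exp M)) h1
        rwa [Real.log_exp] at this
      have h3 : M < Real.log (Real.log t) := by
        have := Real.log_lt_log (Real.exp_pos M) h2
        rwa [Real.log_exp] at this
      linarith
    have hll0 : (0 : ℝ) < Real.log (Real.log t) := by linarith
    set x := Real.sqrt (Real.log (Real.log t) / c) with hx
    have hx0 : 0 ≤ x := Real.sqrt_nonneg _
    have hsq : x ^ 2 = Real.log (Real.log t) / c := Real.sq_sqrt (by positivity)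
    -- x ≥ 2
    have hx2 : (2 : ℝ) ≤ x := by
      have h4c : 4 * c ≤ Real.log (Real.log t) :=
        le_trans (le_trans (le_max_right 1 (4 * c)) (le_max_left _ _)) hMll
      have : (4 : ℝ) ≤ x ^ 2 := by
        rw [hsq]; rw [le_div_iff₀ hc]; linarith
      nlinarith
    -- ε x ≥ 2
    have hεx : (2 : ℝ) ≤ ε * x := by
      have h4c : 4 * c / ε ^ 2 ≤ Real.log (Real.log t) :=
        le_trans (le_max_right _ _) hMll
      have h1 : (4 : ℝ) / ε ^ 2 ≤ x ^ 2 := by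
        rw [hsq, div_le_div_iff₀ (by positivity) hc]
        rw [div_le_iff₀ (by positivity)] at h4c
        nlinarith
      have h2 : (2 / ε) ^ 2 ≤ x ^ 2 := by
        rw [div_pow]; convert h1 using 2; norm_num
      have h3 : 2 / ε ≤ x := by nlinarith [sq_nonneg (2 / ε - x), div_pos (by norm_num : (0:ℝ) < 2) hε]
      rw [div_le_iff₀ hε] at h3
      linarith
    -- first bound
    have hb := hfirst t htgt
    refine le_trans hb (ENNReal.ofReal_le_ofReal ?_)
    -- t ^ (1 - ⌊x⌋) ≤ exp (...)
    set k : ℤ := ⌊x⌋ with hk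
    have hkx : x - 1 ≤ (k : ℝ) := (Int.sub_one_lt_floor x).le
    have hxk : (k : ℝ) ≤ x := Int.floor_le x
    -- rewrite zpow via exp
    have hzpow : t ^ ((1 : ℤ) - k) = Real.exp (Real.log t * ((1 : ℝ) - k)) := by
      rw [← Real.rpow_intCast t ((1 : ℤ) - k), Real.rpow_def_of_pos ht0]
      push_cast
      ring_nf
    rw [hzpow, Real.exp_le_exp]
    -- √(log log t) = x * √c
    have hsqc : Real.sqrt c ≠ 0 := ne_of_gt (Real.sqrt_pos.mpr hc)
    have hsplit : Real.sqrt (Real.log (Real.log t)) = x * Real.sqrt c := by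
      rw [hx, Real.sqrt_div hll0.le, div_mul_cancel₀ _ hsqc]
    rw [hsplit]
    have hgoal : -((1 - ε) / Real.sqrt c) * Real.log t * (x * Real.sqrt c) =
        Real.log t * (-(1 - ε) * x) := by
      field_simp
    rw [hgoal]
    have hkey : (1 : ℝ) - k ≤ -(1 - ε) * x := by nlinarith
    exact mul_le_mul_of_nonneg_left hkey hlogt.le
end
end

section
/- Let c, c₀ > 0 and let X be a non-negative random variable on a probability space such that E[X^h] ≤ exp(exp(c h²)) for every positive integer h and E[X^h] ≥ exp(exp(c₀ h)) for all sufficiently large positive integers h. Then for every ε > 0 there exists z₀ such that for all z ≥ z₀, P(X ≥ z) ≥ exp( −(log z)^{(log log z)^{1+ε}} ). Equivalently, with L := log log z and M := log log log z, one has P(X ≥ z) ≥ exp( −L M e^{c L² M²} ) for all sufficiently large z. -/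
noncomputable section

open MeasureTheory

lemma pointwise_bound (h : ℕ) (z B x : ℝ) (hx : 0 ≤ x) (hz : 0 ≤ z) (hB : 0 < B) :
    x ^ h ≤ z ^ h + (if z ≤ x then 4 * B else 0) + x ^ (2 * h) / (4 * B) := by
  have h4B : (0:ℝ) < 4 * B := by linarith
  rcases le_or_gt z x with hzx | hzx
  · rw [if_pos hzx]
    rcases le_or_gt (x ^ h) (4 * B) with hxh | hxh
    · have h1 : (0:ℝ) ≤ z ^ h := pow_nonneg hz h
      have h2 : (0:ℝ) ≤ x ^ (2 * h) / (4 * B) := by positivity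
      linarith
    · have hx2 : x ^ (2 * h) = x ^ h * x ^ h := by rw [two_mul, pow_add]
      have : x ^ h ≤ x ^ (2 * h) / (4 * B) := by
        rw [hx2, le_div_iff₀ h4B]
        have hxh0 : (0:ℝ) ≤ x ^ h := pow_nonneg hx h
        nlinarith
      have h1 : (0:ℝ) ≤ z ^ h := pow_nonneg hz h
      linarith
  · rw [if_neg (not_le.mpr hzx)]
    have h1 : x ^ h ≤ z ^ h := pow_le_pow_left₀ hx hzx.le h
    have h2 : (0:ℝ) ≤ x ^ (2 * h) / (4 * B) := by positivity
    linarith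

lemma core_bound {Ω : Type*} [MeasurableSpace Ω] (P : Measure Ω) [IsProbabilityMeasure P]
    (X : Ω → ℝ) (hX : Measurable X) (hXnn : ∀ ω, 0 ≤ X ω)
    (h : ℕ) (z A B : ℝ) (hA : 1 ≤ A) (hB : 0 < B) (hz0 : 0 ≤ z)
    (hmomL : ENNReal.ofReal A ≤ ∫⁻ ω, ENNReal.ofReal (X ω ^ h) ∂P)
    (hmomU : ∫⁻ ω, ENNReal.ofReal (X ω ^ (2 * h)) ∂P ≤ ENNReal.ofReal B)
    (hzh : z ^ h ≤ A / 2) :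
    ENNReal.ofReal (A / (16 * B)) ≤ P {ω | z ≤ X ω} := by
  have hA0 : (0:ℝ) < A := by linarith
  have h4B : (0:ℝ) < 4 * B := by linarith
  set S : Set Ω := {ω | z ≤ X ω} with hS
  have hSm : MeasurableSet S := measurableSet_le measurable_const hX
  -- pointwise bound in ENNReal
  have hpt : ∀ ω, ENNReal.ofReal (X ω ^ h) ≤
      ENNReal.ofReal (z ^ h) + S.indicator (fun _ => ENNReal.ofReal (4 * B)) ω
        + ENNReal.ofReal (X ω ^ (2 * h)) / ENNReal.ofReal (4 * B) := by
    intro ω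
    have hreal := pointwise_bound h z B (X ω) (hXnn ω) hz0 hB
    have : ENNReal.ofReal (X ω ^ h) ≤
        ENNReal.ofReal (z ^ h + (if z ≤ X ω then 4 * B else 0) + X ω ^ (2 * h) / (4 * B)) :=
      ENNReal.ofReal_le_ofReal hreal
    refine this.trans ?_
    refine (ENNReal.ofReal_add_le).trans ?_
    refine add_le_add (ENNReal.ofReal_add_le.trans (add_le_add le_rfl ?_)) ?_
    · by_cases hω : z ≤ X ω
      · simp [Set.indicator, hS, hω]
      · simp [Set.indicator, hS, hω]
    · rw [ENNReal.ofReal_div_of_pos h4B]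
  -- integrate
  have hint : ENNReal.ofReal A ≤
      ENNReal.ofReal (z ^ h) + ENNReal.ofReal (4 * B) * P S
        + ENNReal.ofReal B / ENNReal.ofReal (4 * B) := by
    have h1 : ENNReal.ofReal A ≤ ∫⁻ ω, (ENNReal.ofReal (z ^ h)
        + S.indicator (fun _ => ENNReal.ofReal (4 * B)) ω
        + ENNReal.ofReal (X ω ^ (2 * h)) / ENNReal.ofReal (4 * B)) ∂P :=
      hmomL.trans (lintegral_mono hpt)
    refine h1.trans ?_
    have hm1 : Measurable fun ω => ENNReal.ofReal (z ^ h)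
        + S.indicator (fun _ => ENNReal.ofReal (4 * B)) ω := by
      exact (measurable_const.add ((measurable_const (a := ENNReal.ofReal (4*B))).indicator hSm))
    rw [lintegral_add_right _ (by
      exact (hX.pow_const (2*h)).ennreal_ofReal.div_const _)]
    rw [lintegral_add_right _ ((measurable_const (a := ENNReal.ofReal (4*B))).indicator hSm)]
    rw [lintegral_const, measure_univ, mul_one, lintegral_indicator_const hSm]
    refine add_le_add le_rfl ?_
    -- ∫ X^{2h}/(4B) ≤ B/(4B)
    simp only [div_eq_mul_inv]
    rw [lintegral_mul_const _ ((hX.pow_const (2*h)).ennreal_ofReal)]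
    exact mul_le_mul_left hmomU _
  -- arithmetic in ENNReal
  have hq : ENNReal.ofReal B / ENNReal.ofReal (4 * B) = ENNReal.ofReal (1 / 4) := by
    rw [← ENNReal.ofReal_div_of_pos h4B]
    congr 1
    field_simp
  rw [hq] at hint
  have hint2 : ENNReal.ofReal A ≤ ENNReal.ofReal (3 * A / 4) + ENNReal.ofReal (4 * B) * P S := by
    refine hint.trans ?_
    have e1 : ENNReal.ofReal (z ^ h) ≤ ENNReal.ofReal (A / 2) := ENNReal.ofReal_le_ofReal hzh
    have e2 : ENNReal.ofReal (1 / 4 : ℝ) ≤ ENNReal.ofReal (A / 4) := by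
      apply ENNReal.ofReal_le_ofReal; linarith
    calc ENNReal.ofReal (z ^ h) + ENNReal.ofReal (4 * B) * P S + ENNReal.ofReal (1 / 4)
        ≤ ENNReal.ofReal (A / 2) + ENNReal.ofReal (4 * B) * P S + ENNReal.ofReal (A / 4) := by
          exact add_le_add (add_le_add e1 le_rfl) e2
      _ = (ENNReal.ofReal (A / 2) + ENNReal.ofReal (A / 4)) + ENNReal.ofReal (4 * B) * P S := by
          ring
      _ = ENNReal.ofReal (3 * A / 4) + ENNReal.ofReal (4 * B) * P S := by
          rw [← ENNReal.ofReal_add (by linarith) (by linarith)]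
          congr 2
          ring
  have hsub : ENNReal.ofReal (A / 4) ≤ ENNReal.ofReal (4 * B) * P S := by
    have := tsub_le_iff_left.mpr hint2
    rw [← ENNReal.ofReal_sub _ (by linarith : (0:ℝ) ≤ 3 * A / 4)] at this
    have hAe : A - 3 * A / 4 = A / 4 := by ring
    rwa [hAe] at this
  have hdiv := ENNReal.div_le_of_le_mul' hsub
  rw [← ENNReal.ofReal_div_of_pos h4B] at hdiv
  have : A / 4 / (4 * B) = A / (16 * B) := by
    rw [div_div]; ring_nf
  rwa [this] at hdiv

open Filter Real in
lemma linear_le_exp_eventually (a b : ℝ) : ∀ᶠ ℓ in atTop, a * ℓ + b ≤ Real.exp ℓ := by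
  have h1 : Tendsto (fun x : ℝ => Real.exp x / x ^ 1) atTop atTop :=
    Real.tendsto_exp_div_pow_atTop 1
  filter_upwards [h1.eventually_ge_atTop (|a| + |b| + 1), eventually_ge_atTop (1:ℝ)] with ℓ h hℓ
  have hℓ0 : 0 < ℓ := lt_of_lt_of_le one_pos hℓ
  rw [pow_one, le_div_iff₀ hℓ0] at h
  have h2 : a * ℓ + b ≤ (|a| + |b| + 1) * ℓ := by
    have := abs_nonneg a
    have := abs_nonneg b
    have h3 : a ≤ |a| := le_abs_self a
    have h4 : b ≤ |b| := le_abs_self b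
    nlinarith
  linarith

set_option maxHeartbeats 2000000 in
open Filter Real in
lemma intermediate_bound {Ω : Type*} [MeasurableSpace Ω]
    (P : Measure Ω) [IsProbabilityMeasure P]
    (X : Ω → ℝ) (hX : Measurable X) (hXnn : ∀ ω, 0 ≤ X ω)
    (c c₀ : ℝ) (hc : 0 < c) (hc₀ : 0 < c₀)
    (hupper : ∀ h : ℕ, 1 ≤ h →
      ∫⁻ ω, ENNReal.ofReal (X ω ^ h) ∂P ≤
        ENNReal.ofReal (Real.exp (Real.exp (c * (h : ℝ) ^ 2))))
    (hlower : ∃ N : ℕ, ∀ h : ℕ, N ≤ h →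
      ENNReal.ofReal (Real.exp (Real.exp (c₀ * (h : ℝ)))) ≤
        ∫⁻ ω, ENNReal.ofReal (X ω ^ h) ∂P) :
    ∀ᶠ z in atTop, ENNReal.ofReal
        (Real.exp (-(Real.exp ((5 * c * (2 / c₀ + 1) ^ 2) * Real.log (Real.log z) ^ 2)))) ≤
      P {ω | z ≤ X ω} := by
  obtain ⟨N, hN⟩ := hlower
  obtain ⟨K, hK⟩ : ∃ K : ℝ, K = 5 * c * (2 / c₀ + 1) ^ 2 := ⟨_, rfl⟩
  rw [← hK]
  have hK0 : 0 < K := by rw [hK]; positivity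
  have tendL : Tendsto (fun z : ℝ => Real.log (Real.log z)) atTop atTop :=
    Real.tendsto_log_atTop.comp Real.tendsto_log_atTop
  -- eventual conditions on ℓ
  have evℓ : ∀ᶠ ℓ in atTop,
      (1 : ℝ) ≤ ℓ ∧ (N : ℝ) ≤ 2 * ℓ / c₀ ∧ (1 : ℝ) ≤ 2 * ℓ / c₀ ∧
      (2 * ℓ / c₀ + 1) + Real.log 2 ≤ Real.exp ℓ ∧
      1 + Real.log 16 ≤ Real.exp (c * (2 / c₀ + 1) ^ 2 * ℓ ^ 2) := by
    have e1 := eventually_ge_atTop (1:ℝ)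
    have e2 : ∀ᶠ ℓ : ℝ in atTop, (N:ℝ) ≤ 2 * ℓ / c₀ := by
      have : Tendsto (fun ℓ : ℝ => 2 * ℓ / c₀) atTop atTop := by
        apply Tendsto.atTop_div_const hc₀
        exact tendsto_id.const_mul_atTop two_pos
      exact this.eventually_ge_atTop _
    have e3 : ∀ᶠ ℓ : ℝ in atTop, (1:ℝ) ≤ 2 * ℓ / c₀ := by
      have : Tendsto (fun ℓ : ℝ => 2 * ℓ / c₀) atTop atTop := by
        apply Tendsto.atTop_div_const hc₀
        exact tendsto_id.const_mul_atTop two_pos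
      exact this.eventually_ge_atTop _
    have e4 : ∀ᶠ ℓ : ℝ in atTop, (2 * ℓ / c₀ + 1) + Real.log 2 ≤ Real.exp ℓ := by
      have := linear_le_exp_eventually (2 / c₀) (1 + Real.log 2)
      filter_upwards [this] with ℓ h
      have : 2 / c₀ * ℓ = 2 * ℓ / c₀ := by ring
      linarith [this ▸ h]
    have e5 : ∀ᶠ ℓ : ℝ in atTop, 1 + Real.log 16 ≤ Real.exp (c * (2 / c₀ + 1) ^ 2 * ℓ ^ 2) := by
      have ht : Tendsto (fun ℓ : ℝ => Real.exp (c * (2 / c₀ + 1) ^ 2 * ℓ ^ 2)) atTop atTop := by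
        apply Real.tendsto_exp_atTop.comp
        have h2 : Tendsto (fun ℓ : ℝ => ℓ ^ 2) atTop atTop := tendsto_pow_atTop (by norm_num)
        exact h2.const_mul_atTop (by positivity)
      exact ht.eventually_ge_atTop _
    filter_upwards [e1, e2, e3, e4, e5] with ℓ h1 h2 h3 h4 h5
    exact ⟨h1, h2, h3, h4, h5⟩
  filter_upwards [tendL.eventually evℓ, eventually_ge_atTop (1:ℝ),
    (Real.tendsto_log_atTop.eventually (eventually_ge_atTop (1:ℝ)))] with z hzℓ hz1 hlog1
  obtain ⟨hℓ1, hℓN, hℓ2, hℓexp, hℓ16⟩ := hzℓ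
  set ℓ : ℝ := Real.log (Real.log z) with hℓ
  have hlogz : (1:ℝ) ≤ Real.log z := hlog1
  have hlogz0 : (0:ℝ) < Real.log z := lt_of_lt_of_le one_pos hlogz
  have hexpℓ : Real.exp ℓ = Real.log z := Real.exp_log hlogz0
  set h : ℕ := ⌈2 * ℓ / c₀⌉₊ with hh
  have hch : (2 * ℓ / c₀ : ℝ) ≤ h := Nat.le_ceil _
  have hch2 : (h : ℝ) ≤ 2 * ℓ / c₀ + 1 := by
    exact le_of_lt (Nat.ceil_lt_add_one (by linarith))
  have hh1 : 1 ≤ h := by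
    have : (1:ℝ) ≤ (h:ℝ) := le_trans hℓ2 hch
    exact_mod_cast this
  have hhN : N ≤ h := by
    have : (N:ℝ) ≤ (h:ℝ) := le_trans hℓN hch
    exact_mod_cast this
  set A : ℝ := Real.exp (Real.exp (c₀ * h)) with hA
  set B : ℝ := Real.exp (Real.exp (c * (2 * (h:ℝ)) ^ 2)) with hB
  have hA1 : 1 ≤ A := by
    rw [hA]; exact Real.one_le_exp (Real.exp_nonneg _)
  have hB0 : 0 < B := Real.exp_pos _
  have hmomL : ENNReal.ofReal A ≤ ∫⁻ ω, ENNReal.ofReal (X ω ^ h) ∂P := hN h hhN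
  have hmomU : ∫⁻ ω, ENNReal.ofReal (X ω ^ (2 * h)) ∂P ≤ ENNReal.ofReal B := by
    have := hupper (2 * h) (by omega)
    convert this using 3
    norm_cast
  have hzh : z ^ h ≤ A / 2 := by
    -- log (z^h) = h log z ≤ exp(c₀ h) - log 2
    have hz0 : (0:ℝ) < z := lt_of_lt_of_le one_pos hz1
    have key : (h : ℝ) * Real.log z + Real.log 2 ≤ Real.exp (c₀ * h) := by
      have h1 : (h : ℝ) * Real.log z ≤ (2 * ℓ / c₀ + 1) * Real.log z := by
        apply mul_le_mul_of_nonneg_right hch2 (le_of_lt hlogz0)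
      have h2 : Real.exp ℓ * Real.exp ℓ ≤ Real.exp (c₀ * h) := by
        rw [← Real.exp_add]
        apply Real.exp_le_exp.mpr
        have : 2 * ℓ ≤ c₀ * h := by
          have := mul_le_mul_of_nonneg_left hch (le_of_lt hc₀)
          rw [mul_div_assoc] at this
          calc 2 * ℓ = c₀ * (2 * ℓ / c₀) := by field_simp
          _ ≤ c₀ * h := mul_le_mul_of_nonneg_left hch (le_of_lt hc₀)
        linarith
      have h3 : (2 * ℓ / c₀ + 1) * Real.log z + Real.log 2 ≤ Real.exp ℓ * Real.exp ℓ := by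
        rw [hexpℓ]
        have hl2 : (0:ℝ) < Real.log 2 := Real.log_pos (by norm_num)
        have : (2 * ℓ / c₀ + 1) + Real.log 2 ≤ Real.log z := by rw [← hexpℓ]; exact hℓexp
        nlinarith [hlogz, hl2]
      linarith
    have : Real.log (z ^ h) ≤ Real.log (A / 2) := by
      rw [Real.log_pow, Real.log_div (by positivity) (by norm_num), hA, Real.log_exp]
      push_cast
      linarith
    have hzpow : (0:ℝ) < z ^ h := by positivity
    calc z ^ h = Real.exp (Real.log (z ^ h)) := (Real.exp_log hzpow).symm
      _ ≤ Real.exp (Real.log (A / 2)) := Real.exp_le_exp.mpr this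
      _ = A / 2 := Real.exp_log (by positivity)
  have hcore := core_bound P X hX hXnn h z A B hA1 hB0 (by linarith) hmomL hmomU hzh
  refine le_trans ?_ hcore
  apply ENNReal.ofReal_le_ofReal
  -- exp(-(exp(K ℓ²))) ≤ A / (16 B)
  have hKe : Real.log 16 + Real.exp (c * (2 * (h:ℝ)) ^ 2) ≤ Real.exp (K * ℓ ^ 2) := by
    have hhℓ : (h : ℝ) ≤ (2 / c₀ + 1) * ℓ := by
      calc (h:ℝ) ≤ 2 * ℓ / c₀ + 1 := hch2
      _ ≤ (2 / c₀ + 1) * ℓ := by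
          have : 2 * ℓ / c₀ = (2 / c₀) * ℓ := by ring
          nlinarith [hℓ1]
    have hhnn : (0:ℝ) ≤ (h:ℝ) := Nat.cast_nonneg _
    have hsq : c * (2 * (h:ℝ)) ^ 2 ≤ 4 * c * (2 / c₀ + 1) ^ 2 * ℓ ^ 2 := by
      have hsq2 : ((h:ℝ)) ^ 2 ≤ (2 / c₀ + 1) ^ 2 * ℓ ^ 2 := by
        nlinarith [pow_le_pow_left₀ hhnn hhℓ 2]
      nlinarith [mul_le_mul_of_nonneg_left hsq2 (by positivity : (0:ℝ) ≤ 4 * c)]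
    have hsplit : K * ℓ ^ 2 = 4 * c * (2 / c₀ + 1) ^ 2 * ℓ ^ 2 + c * (2 / c₀ + 1) ^ 2 * ℓ ^ 2 := by
      rw [hK]; ring
    rw [hsplit, Real.exp_add]
    have e1 : Real.exp (c * (2 * (h:ℝ)) ^ 2) ≤ Real.exp (4 * c * (2 / c₀ + 1) ^ 2 * ℓ ^ 2) :=
      Real.exp_le_exp.mpr hsq
    have e2 : 1 + Real.log 16 ≤ Real.exp (c * (2 / c₀ + 1) ^ 2 * ℓ ^ 2) := hℓ16
    have e3 : (1:ℝ) ≤ Real.exp (4 * c * (2 / c₀ + 1) ^ 2 * ℓ ^ 2) := Real.one_le_exp (by positivity)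
    have hl16 : (0:ℝ) < Real.log 16 := Real.log_pos (by norm_num)
    set E4 := Real.exp (4 * c * (2 / c₀ + 1) ^ 2 * ℓ ^ 2)
    set E1 := Real.exp (c * (2 / c₀ + 1) ^ 2 * ℓ ^ 2)
    have step1 : E4 * (1 + Real.log 16) ≤ E4 * E1 :=
      mul_le_mul_of_nonneg_left e2 (by linarith)
    have step2 : Real.log 16 ≤ E4 * Real.log 16 := le_mul_of_one_le_left hl16.le e3
    nlinarith
  have h16B : 16 * B ≤ Real.exp (Real.exp (K * ℓ ^ 2)) := by
    have : Real.log (16 * B) ≤ Real.exp (K * ℓ ^ 2) := by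
      rw [Real.log_mul (by norm_num) (ne_of_gt hB0), hB, Real.log_exp]
      exact hKe
    calc 16 * B = Real.exp (Real.log (16 * B)) := (Real.exp_log (by positivity)).symm
      _ ≤ Real.exp (Real.exp (K * ℓ ^ 2)) := Real.exp_le_exp.mpr this
  calc Real.exp (-(Real.exp (K * ℓ ^ 2))) = 1 / Real.exp (Real.exp (K * ℓ ^ 2)) := by
        rw [Real.exp_neg]; ring
    _ ≤ 1 / (16 * B) := by
        apply one_div_le_one_div_of_le (by positivity) h16B
    _ ≤ A / (16 * B) := by
        apply div_le_div_of_nonneg_right hA1 (by positivity)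

/-- **Tail lower bound from moment bounds.**  If `X ≥ 0` satisfies
`E[X^h] ≤ exp(exp(c h²))` for every positive integer `h` and
`E[X^h] ≥ exp(exp(c₀ h))` for all sufficiently large `h`, then for every `ε > 0`,
for all sufficiently large `z`, `P(X ≥ z) ≥ exp(-(log z)^{(log log z)^{1+ε}})`;
equivalently, with `L = log log z` and `M = log log log z`, for all sufficiently large `z`,
`P(X ≥ z) ≥ exp(-L M e^{c L² M²})`. -/
theorem tail_lower_bound_from_moments {Ω : Type*} [MeasurableSpace Ω]
    (P : Measure Ω) [IsProbabilityMeasure P]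
    (X : Ω → ℝ) (hX : Measurable X) (hXnn : ∀ ω, 0 ≤ X ω)
    (c c₀ : ℝ) (hc : 0 < c) (hc₀ : 0 < c₀)
    (hupper : ∀ h : ℕ, 1 ≤ h →
      ∫⁻ ω, ENNReal.ofReal (X ω ^ h) ∂P ≤
        ENNReal.ofReal (Real.exp (Real.exp (c * (h : ℝ) ^ 2))))
    (hlower : ∃ N : ℕ, ∀ h : ℕ, N ≤ h →
      ENNReal.ofReal (Real.exp (Real.exp (c₀ * (h : ℝ)))) ≤
        ∫⁻ ω, ENNReal.ofReal (X ω ^ h) ∂P) :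
    (∀ ε : ℝ, 0 < ε → ∃ z₀ : ℝ, ∀ z : ℝ, z₀ ≤ z →
      ENNReal.ofReal
          (Real.exp (-(Real.log z ^ (Real.log (Real.log z) ^ (1 + ε))))) ≤
        P {ω | z ≤ X ω}) ∧
    (∃ z₁ : ℝ, ∀ z : ℝ, z₁ ≤ z →
      ENNReal.ofReal
          (Real.exp (-(Real.log (Real.log z) * Real.log (Real.log (Real.log z)) *
            Real.exp (c * Real.log (Real.log z) ^ 2 *
              Real.log (Real.log (Real.log z)) ^ 2)))) ≤
        P {ω | z ≤ X ω}) := by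
  have hinter := intermediate_bound P X hX hXnn c c₀ hc hc₀ hupper hlower
  obtain ⟨K, hK⟩ : ∃ K : ℝ, K = 5 * c * (2 / c₀ + 1) ^ 2 := ⟨_, rfl⟩
  rw [← hK] at hinter
  have hK0 : 0 < K := by rw [hK]; positivity
  have tendL : Filter.Tendsto (fun z : ℝ => Real.log (Real.log z)) Filter.atTop Filter.atTop :=
    Real.tendsto_log_atTop.comp Real.tendsto_log_atTop
  have tendM : Filter.Tendsto (fun z : ℝ => Real.log (Real.log (Real.log z)))
      Filter.atTop Filter.atTop :=
    Real.tendsto_log_atTop.comp tendL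
  constructor
  · intro ε hε
    have evK : ∀ᶠ z : ℝ in Filter.atTop,
        K ≤ Real.log (Real.log z) ^ (ε : ℝ) :=
      ((tendsto_rpow_atTop hε).comp tendL).eventually_ge_atTop K
    have evfinal : ∀ᶠ z : ℝ in Filter.atTop,
        ENNReal.ofReal
          (Real.exp (-(Real.log z ^ (Real.log (Real.log z) ^ (1 + ε))))) ≤
        P {ω | z ≤ X ω} := by
      filter_upwards [hinter, evK, tendL.eventually (Filter.eventually_ge_atTop (1:ℝ)),
        Real.tendsto_log_atTop.eventually (Filter.eventually_ge_atTop (1:ℝ))] with z hP hKz hℓ1 hlz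
      refine le_trans ?_ hP
      apply ENNReal.ofReal_le_ofReal
      apply Real.exp_le_exp.mpr
      apply neg_le_neg
      -- exp(K ℓ²) ≤ (log z)^(ℓ^(1+ε))
      set ℓ : ℝ := Real.log (Real.log z) with hℓdef
      have hℓ0 : (0:ℝ) < ℓ := lt_of_lt_of_le one_pos hℓ1
      have hlz0 : (0:ℝ) < Real.log z := lt_of_lt_of_le one_pos hlz
      rw [Real.rpow_def_of_pos hlz0]
      apply Real.exp_le_exp.mpr
      -- K * ℓ^2 ≤ ℓ * ℓ^(1+ε)
      have h1 : Real.log (Real.log z) * ℓ ^ ((1:ℝ) + ε) = ℓ * ℓ ^ ((1:ℝ) + ε) := rfl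
      rw [h1]
      have h2 : ℓ * ℓ ^ ((1:ℝ) + ε) = ℓ ^ (2:ℝ) * ℓ ^ (ε:ℝ) := by
        rw [Real.rpow_add hℓ0 1 ε, Real.rpow_one,
          show (2:ℝ) = ((2:ℕ):ℝ) by norm_num, Real.rpow_natCast]
        ring
      rw [h2]
      have h3 : ℓ ^ (2:ℝ) = ℓ ^ (2:ℕ) := by
        rw [← Real.rpow_natCast ℓ 2]; norm_num
      rw [h3]
      have h4 : (0:ℝ) ≤ ℓ ^ (2:ℕ) := sq_nonneg ℓ
      calc K * ℓ ^ (2:ℕ) ≤ ℓ ^ (ε:ℝ) * ℓ ^ (2:ℕ) := mul_le_mul_of_nonneg_right hKz h4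
        _ = ℓ ^ (2:ℕ) * ℓ ^ (ε:ℝ) := by ring
    obtain ⟨z₀, hz₀⟩ := Filter.eventually_atTop.mp evfinal
    exact ⟨z₀, hz₀⟩
  · have evM : ∀ᶠ z : ℝ in Filter.atTop,
        K ≤ c * Real.log (Real.log (Real.log z)) ^ (2:ℕ) := by
      have ht : Filter.Tendsto (fun m : ℝ => c * m ^ (2:ℕ)) Filter.atTop Filter.atTop :=
        (Filter.tendsto_pow_atTop (by norm_num)).const_mul_atTop hc
      exact (ht.comp tendM).eventually_ge_atTop K
    have evfinal : ∀ᶠ z : ℝ in Filter.atTop,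
        ENNReal.ofReal
          (Real.exp (-(Real.log (Real.log z) * Real.log (Real.log (Real.log z)) *
            Real.exp (c * Real.log (Real.log z) ^ 2 *
              Real.log (Real.log (Real.log z)) ^ 2)))) ≤
        P {ω | z ≤ X ω} := by
      filter_upwards [hinter, evM, tendL.eventually (Filter.eventually_ge_atTop (1:ℝ)),
        tendM.eventually (Filter.eventually_ge_atTop (1:ℝ))] with z hP hKz hℓ1 hM1
      refine le_trans ?_ hP
      apply ENNReal.ofReal_le_ofReal
      apply Real.exp_le_exp.mpr
      apply neg_le_neg
      set ℓ : ℝ := Real.log (Real.log z) with hℓdef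
      set M : ℝ := Real.log (Real.log (Real.log z)) with hMdef
      have hLM : (1:ℝ) ≤ ℓ * M := one_le_mul_of_one_le_of_one_le hℓ1 hM1
      have hexp1 : Real.exp (K * ℓ ^ 2) ≤ Real.exp (c * ℓ ^ 2 * M ^ 2) := by
        apply Real.exp_le_exp.mpr
        have h4 : (0:ℝ) ≤ ℓ ^ (2:ℕ) := sq_nonneg ℓ
        calc K * ℓ ^ 2 ≤ (c * M ^ (2:ℕ)) * ℓ ^ 2 := mul_le_mul_of_nonneg_right hKz h4
          _ = c * ℓ ^ 2 * M ^ 2 := by ring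
      calc Real.exp (K * ℓ ^ 2) ≤ Real.exp (c * ℓ ^ 2 * M ^ 2) := hexp1
        _ = 1 * Real.exp (c * ℓ ^ 2 * M ^ 2) := by ring
        _ ≤ (ℓ * M) * Real.exp (c * ℓ ^ 2 * M ^ 2) := by
            apply mul_le_mul_of_nonneg_right hLM (Real.exp_nonneg _)
    obtain ⟨z₁, hz₁⟩ := Filter.eventually_atTop.mp evfinal
    exact ⟨z₁, hz₁⟩
end
end

section
/- Let G = (V,E,c) be a finite connected weighted graph with positive conductances, with |V| = n + 1 for some positive integer n, and suppose there is a vertex o ∈ V such that every vertex v ≠ o has degree at most 3 in G. Then Σ_{T∈𝒯(G)} ∏_{e∈E(T)} c_e ≤ 3^n · P, where 𝒯(G) is the set of spanning trees of G and P is the product of the n largest values (counted with multiplicity) in the multiset {c_e : e ∈ E}. -/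
noncomputable section

open SimpleGraph

section aux

private lemma take_succ_prod_le' (a : ℝ) :
    ∀ (L : List ℝ) (k : ℕ), (∀ x ∈ L, 0 < x) → (∀ x ∈ L, x ≤ a) →
      k + 1 ≤ L.length → (L.take (k+1)).prod ≤ a * (L.take k).prod := by
  intro L
  induction L with
  | nil => intro k _ _ h; simp at h
  | cons b L ih =>
    intro k hpos hle hlen
    cases k with
    | zero => simpa using hle b (by simp)
    | succ k =>
      have hb : 0 < b := hpos b (by simp)
      have h1 : (L.take (k+1)).prod ≤ a * (L.take k).prod :=
        ih k (fun x hx => hpos x (by simp [hx])) (fun x hx => hle x (by simp [hx]))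
          (by simpa using Nat.succ_le_succ_iff.mp hlen)
      calc ((b :: L).take (k+2)).prod = b * (L.take (k+1)).prod := by simp
        _ ≤ b * (a * (L.take k).prod) := by
            exact mul_le_mul_of_nonneg_left h1 hb.le
        _ = a * ((b :: L).take (k+1)).prod := by simp; ring

private lemma sublist_prod_le' : ∀ {m L : List ℝ}, List.Sublist m L → L.Pairwise (· ≥ ·) →
    (∀ x ∈ L, 0 < x) → m.prod ≤ (L.take m.length).prod := by
  intro m L h
  induction h with
  | slnil => intro _ _; simp
  | @cons m L a h ih =>
    intro hs hpos
    have hs' := List.pairwise_cons.mp hs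
    have h1 := ih hs'.2 (fun x hx => hpos x (by simp [hx]))
    cases hm : m.length with
    | zero =>
      rw [List.length_eq_zero_iff] at hm
      subst hm; simp
    | succ k =>
      rw [hm] at h1
      have h2 : (L.take (k+1)).prod ≤ a * (L.take k).prod :=
        take_succ_prod_le' a L k (fun x hx => hpos x (by simp [hx]))
          (fun x hx => hs'.1 x hx) (hm ▸ h.length_le)
      calc m.prod ≤ (L.take (k+1)).prod := h1
        _ ≤ a * (L.take k).prod := h2
        _ = ((a :: L).take (k+1)).prod := by simp
  | @cons_cons m L a h ih =>
    intro hs hpos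
    have hs' := List.pairwise_cons.mp hs
    have h1 := ih hs'.2 (fun x hx => hpos x (by simp [hx]))
    have ha : (0:ℝ) ≤ a := (hpos a (by simp)).le
    simpa using mul_le_mul_of_nonneg_left h1 ha

variable {V : Type*} [DecidableEq V] {T : SimpleGraph V}

private lemma exists_path_length' (hT : T.Connected) (u o : V) :
    ∃ p : T.Walk u o, p.IsPath ∧ p.length = T.dist u o := by
  obtain ⟨q, hq⟩ := hT.exists_walk_length_eq_dist u o
  exact ⟨q.bypass, q.bypass_isPath,
    le_antisymm (le_trans q.length_bypass_le hq.le) (SimpleGraph.dist_le _)⟩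

private lemma dist_le_of_mem_support' {u o v : V} (p : T.Walk u o) (h : v ∈ p.support) :
    T.dist v o + (p.takeUntil v h).length ≤ p.length := by
  have h1 := congrArg SimpleGraph.Walk.length (p.take_spec h)
  rw [SimpleGraph.Walk.length_append] at h1
  have h2 := SimpleGraph.dist_le (p.dropUntil v h)
  omega

omit [DecidableEq V] in
private lemma exists_parent' (hT : T.Connected) {o v : V} (hv : v ≠ o) :
    ∃ u, T.Adj v u ∧ T.dist u o + 1 = T.dist v o := by
  obtain ⟨p, hp⟩ := hT.exists_walk_length_eq_dist v o
  cases p with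
  | nil => exact absurd rfl hv
  | @cons _ u _ h q =>
    refine ⟨u, h, ?_⟩
    have h1 : T.dist u o ≤ q.length := SimpleGraph.dist_le q
    have hd1 : T.dist v u ≤ 1 := by
      simpa using SimpleGraph.dist_le (SimpleGraph.Walk.cons h SimpleGraph.Walk.nil)
    have h2 : T.dist v o ≤ T.dist v u + T.dist u o := hT.dist_triangle
    simp [SimpleGraph.Walk.length_cons] at hp
    omega

private lemma parent_unique' (hT : T.IsTree) {o a b₁ b₂ : V}
    (h1 : T.Adj a b₁) (hd1 : T.dist b₁ o + 1 = T.dist a o)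
    (h2 : T.Adj a b₂) (hd2 : T.dist b₂ o + 1 = T.dist a o) : b₁ = b₂ := by
  obtain ⟨q1, hq1p, hq1l⟩ := exists_path_length' hT.isConnected b₁ o
  obtain ⟨q2, hq2p, hq2l⟩ := exists_path_length' hT.isConnected b₂ o
  have ha1 : a ∉ q1.support := fun hm => by
    have h3 := dist_le_of_mem_support' q1 hm
    omega
  have ha2 : a ∉ q2.support := fun hm => by
    have h3 := dist_le_of_mem_support' q2 hm
    omega
  have hp1 : (SimpleGraph.Walk.cons h1 q1).IsPath := hq1p.cons ha1
  have hp2 : (SimpleGraph.Walk.cons h2 q2).IsPath := hq2p.cons ha2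
  have heq := (hT.existsUnique_path a o).unique hp1 hp2
  have := congrArg (fun w : T.Walk a o => w.getVert 1) heq
  simpa using this

private lemma adj_dist' (hT : T.IsTree) {o a b : V} (h : T.Adj a b) :
    T.dist b o + 1 = T.dist a o ∨ T.dist a o + 1 = T.dist b o := by
  have hconn := hT.isConnected
  have hab : T.dist a b ≤ 1 := by
    simpa using SimpleGraph.dist_le (SimpleGraph.Walk.cons h SimpleGraph.Walk.nil)
  have hba : T.dist b a ≤ 1 := by
    simpa using SimpleGraph.dist_le (SimpleGraph.Walk.cons h.symm SimpleGraph.Walk.nil)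
  have htri1 : T.dist a o ≤ T.dist a b + T.dist b o := hconn.dist_triangle
  have htri2 : T.dist b o ≤ T.dist b a + T.dist a o := hconn.dist_triangle
  by_contra hcon
  push_neg at hcon
  have hd : T.dist a o = T.dist b o := by omega
  have hne : a ≠ b := h.ne
  obtain ⟨q, hqp, hql⟩ := exists_path_length' hconn b o
  by_cases hmem : a ∈ q.support
  · have h3 := dist_le_of_mem_support' q hmem
    have h4 : 0 < (q.takeUntil a hmem).length := by
      rcases Nat.eq_zero_or_pos (q.takeUntil a hmem).length with h0 | hk
      · exact absurd (SimpleGraph.Walk.eq_of_length_eq_zero h0).symm hne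
      · exact hk
    omega
  · have hp : (SimpleGraph.Walk.cons h q).IsPath := hqp.cons hmem
    obtain ⟨p, hpp, hpl⟩ := exists_path_length' hconn a o
    have heq := (hT.existsUnique_path a o).unique hp hpp
    have hlen := congrArg SimpleGraph.Walk.length heq
    simp [SimpleGraph.Walk.length_cons] at hlen
    omega

end aux

private lemma treeWeight_eq' {V : Type*} [Fintype V] (T : SimpleGraph V)
    (c : V → V → ℝ) (hc : ∀ u v, c u v = c v u) [inst : Fintype T.edgeSet] :
    treeWeight T c hc = ((T.edgeFinset.val.map (Sym2.lift ⟨c, hc⟩))).prod := by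
  unfold treeWeight
  simp only []
  rw [Finset.prod_eq_multiset_prod]
  congr 2
  unfold SimpleGraph.edgeFinset
  congr!

set_option synthInstance.maxHeartbeats 1000000 in
set_option maxHeartbeats 1000000 in
/-- **Weighted spanning tree sum bound.**  For a finite connected weighted graph `G` on
`n + 1` vertices with positive conductances, if every vertex other than `o` has degree at
most `3`, then `Σ_{T ∈ 𝒯(G)} ∏_{e ∈ E(T)} c_e ≤ 3^n · P`, where `P` is the product of the
`n` largest conductance values (with multiplicity); `P` is realized by sorting the multiset
of edge conductances in increasing order, reversing, and taking the first `n` entries. -/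
theorem weighted_spanning_tree_sum_le {V : Type*} [Fintype V] [DecidableEq V]
    (G : SimpleGraph V) [DecidableRel G.Adj] (hG : G.Connected)
    (c : V → V → ℝ) (hc : ∀ u v, c u v = c v u)
    (hpos : ∀ u v, G.Adj u v → 0 < c u v)
    (n : ℕ) (hn : 0 < n) (hcard : Fintype.card V = n + 1)
    (o : V) (hdeg : ∀ v, v ≠ o → G.degree v ≤ 3) :
    (∑' T : {T : SimpleGraph V // T ≤ G ∧ T.IsTree}, treeWeight T.1 c hc) ≤
      3 ^ n *
        (((G.edgeFinset.val.map (Sym2.lift ⟨c, hc⟩)).sort (· ≤ ·)).reverse.take n).prod := by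
  classical
  set w : Sym2 V → ℝ := Sym2.lift ⟨c, hc⟩ with hw
  set M : Multiset ℝ := G.edgeFinset.val.map w with hM
  set L : List ℝ := (M.sort (· ≤ ·)).reverse with hL
  -- positivity of the conductance values
  have hMpos : ∀ x ∈ M, 0 < x := by
    intro x hx
    rw [hM, Multiset.mem_map] at hx
    obtain ⟨e, he, rfl⟩ := hx
    rw [Finset.mem_val, SimpleGraph.mem_edgeFinset] at he
    induction e using Sym2.ind with
    | _ u v => simpa [hw] using hpos u v he
  have hLpos : ∀ x ∈ L, 0 < x := by
    intro x hx
    rw [hL, List.mem_reverse, Multiset.mem_sort] at hx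
    exact hMpos x hx
  have hLsorted : L.Pairwise (· ≥ ·) := by
    rw [hL]
    exact List.pairwise_reverse.mpr (Multiset.pairwise_sort M (· ≤ ·))
  have hPn : 0 ≤ (L.take n).prod :=
    List.prod_nonneg fun x hx => (hLpos x (List.mem_of_mem_take hx)).le
  -- individual tree weights are bounded by the product of the n largest values
  have hweight : ∀ (T : SimpleGraph V), T ≤ G → T.IsTree →
      treeWeight T c hc ≤ (L.take n).prod := by
    intro T hle hT
    haveI : DecidableRel T.Adj := Classical.decRel _
    set t : Multiset ℝ := T.edgeFinset.val.map w with ht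
    have hwe : treeWeight T c hc = t.prod := treeWeight_eq' T c hc
    have hcardT : t.card = n := by
      rw [ht, Multiset.card_map]
      have := hT.card_edgeFinset
      rw [hcard] at this
      simpa using this
    have hsub : t ≤ M := by
      rw [ht, hM]
      exact Multiset.map_le_map (Finset.val_le_iff.mpr
        (SimpleGraph.edgeFinset_mono hle))
    have hsubperm : List.Subperm (t.sort (· ≤ ·)) (M.sort (· ≤ ·)) := by
      rw [← Multiset.coe_le, Multiset.sort_eq, Multiset.sort_eq]
      exact hsub
    have hsubl : List.Sublist (t.sort (· ≤ ·)) (M.sort (· ≤ ·)) :=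
      List.sublist_of_subperm_of_pairwise hsubperm
        (Multiset.pairwise_sort _ _) (Multiset.pairwise_sort _ _)
    have hrev : List.Sublist ((t.sort (· ≤ ·)).reverse) L := by
      rw [hL]; exact hsubl.reverse
    have hlen : ((t.sort (· ≤ ·)).reverse).length = n := by
      simp [hcardT]
    have hprod : t.prod = ((t.sort (· ≤ ·)).reverse).prod := by
      rw [List.prod_reverse, ← Multiset.prod_coe, Multiset.sort_eq]
    rw [hwe, hprod]
    have := sublist_prod_le' hrev hLsorted hLpos
    rwa [hlen] at this
  -- counting spanning trees
  haveI : Fintype {T : SimpleGraph V // T ≤ G ∧ T.IsTree} := Fintype.ofFinite _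
  have hcount : Fintype.card {T : SimpleGraph V // T ≤ G ∧ T.IsTree} ≤ 3 ^ n := by
    -- parent function
    have hF : ∀ (T : {T : SimpleGraph V // T ≤ G ∧ T.IsTree}) (v : {v : V // v ≠ o}),
        ∃ u : {u : V // u ∈ G.neighborFinset v.1},
          T.1.Adj v.1 u.1 ∧ T.1.dist u.1 o + 1 = T.1.dist v.1 o := by
      intro T v
      obtain ⟨u, hu1, hu2⟩ := exists_parent' T.2.2.isConnected v.2
      exact ⟨⟨u, (SimpleGraph.mem_neighborFinset _ _ _).mpr (T.2.1 hu1)⟩, hu1, hu2⟩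
    choose F hF1 hF2 using hF
    have hinj : Function.Injective F := by
      have key : ∀ (T₁ T₂ : {T : SimpleGraph V // T ≤ G ∧ T.IsTree}), F T₁ = F T₂ → T₁.1 ≤ T₂.1 := by
        intro T₁ T₂ heq a b hadj
        have step : ∀ a b : V, T₁.1.Adj a b →
            T₁.1.dist b o + 1 = T₁.1.dist a o → T₂.1.Adj a b := by
          intro a b hadj hd
          have ha : a ≠ o := by
            intro h; subst h
            rw [SimpleGraph.dist_self] at hd
            omega
          have hb : b = (F T₁ ⟨a, ha⟩).1 :=
            parent_unique' T₁.2.2 hadj hd (hF1 T₁ ⟨a, ha⟩) (hF2 T₁ ⟨a, ha⟩)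
          rw [hb, heq]
          exact hF1 T₂ ⟨a, ha⟩
        rcases adj_dist' T₁.2.2 (o := o) hadj with hd | hd
        · exact step a b hadj hd
        · exact (step b a hadj.symm hd).symm
      intro T₁ T₂ heq
      exact Subtype.ext (le_antisymm (key T₁ T₂ heq) (key T₂ T₁ heq.symm))
    have step1 : Fintype.card {T : SimpleGraph V // T ≤ G ∧ T.IsTree} ≤
        Fintype.card (∀ v : {v : V // v ≠ o}, {u : V // u ∈ G.neighborFinset v.1}) :=
      Fintype.card_le_of_injective F hinj
    have step2 : Fintype.card (∀ v : {v : V // v ≠ o}, {u : V // u ∈ G.neighborFinset v.1})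
        = ∏ v : {v : V // v ≠ o}, (G.neighborFinset v.1).card := by
      rw [Fintype.card_pi]
      exact Finset.prod_congr rfl fun v _ => Fintype.card_coe _
    have step3 : (∏ v : {v : V // v ≠ o}, (G.neighborFinset v.1).card)
        ≤ ∏ _v : {v : V // v ≠ o}, 3 :=
      Finset.prod_le_prod' fun v _ => hdeg v.1 v.2
    have step4 : (∏ _v : {v : V // v ≠ o}, 3) = 3 ^ n := by
      rw [Finset.prod_const, Finset.card_univ]
      congr 1
      rw [Fintype.card_subtype_compl, hcard, Fintype.card_subtype_eq]
      omega
    omega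
  -- put everything together
  rw [tsum_fintype]
  have hsum : (∑ T : {T : SimpleGraph V // T ≤ G ∧ T.IsTree}, treeWeight T.1 c hc) ≤
      (Fintype.card {T : SimpleGraph V // T ≤ G ∧ T.IsTree}) • (L.take n).prod := by
    rw [← Finset.card_univ]
    exact Finset.sum_le_card_nsmul _ _ _ fun T _ => hweight T.1 T.2.1 T.2.2
  refine hsum.trans ?_
  rw [nsmul_eq_mul]
  refine mul_le_mul_of_nonneg_right ?_ hPn
  calc (Fintype.card {T : SimpleGraph V // T ≤ G ∧ T.IsTree} : ℝ) ≤ ((3:ℕ) ^ n : ℕ) := by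
        exact_mod_cast hcount
    _ = 3 ^ n := by push_cast; ring
end
end

section
/- For every θ ∈ ℝ there exist a constant C > 0 and t₀ ∈ (0,1) such that for all 0 < t ≤ t₀, the integral defining G_θ(t) converges and | t (log(1/t))² G_θ(t) − 1 − 2θ/log(1/t) | ≤ C / (log(1/t))². In other words, G_θ(t) = (1/(t (log(1/t))²)) { 1 + 2θ/log(1/t) + O(1/(log(1/t))²) } as t ↓ 0. -/
noncomputable section

open MeasureTheory

/-- The Euler–Mascheroni constant `γ = -∫₀^∞ (log u) e^{-u} du`. -/
def eulerGamma : ℝ := -∫ u in Set.Ioi (0 : ℝ), Real.log u * Real.exp (-u)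

/-- The density `G_θ(t)` of the renewal function of the Dickman subordinator. -/
def GDickman (θ t : ℝ) : ℝ :=
  ∫ s in Set.Ioi (0 : ℝ),
    Real.exp ((θ - eulerGamma) * s) * s * t ^ (s - 1) / Real.Gamma (s + 1)

open Real Set Filter Asymptotics Topology Metric

namespace GDAux

/-- `(log u)^k e^{-u} = O(u^{-a})` at `+∞`, for every `a`. -/
lemma isBigO_top (k : ℕ) : ∀ a : ℝ,
    (fun u : ℝ => Real.log u ^ k * Real.exp (-u)) =O[atTop] (· ^ (-a)) := by
  induction k with
  | zero =>
    intro a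
    simp only [pow_zero, one_mul]
    refine (Asymptotics.isLittleO_of_tendsto' ?_ ?_).isBigO
    · filter_upwards [eventually_gt_atTop (0:ℝ)] with u hu h0
      exact absurd h0 (by positivity)
    · have h := tendsto_rpow_mul_exp_neg_mul_atTop_nhds_zero a 1 one_pos
      simp only [neg_mul, one_mul] at h
      refine h.congr' ?_
      filter_upwards [eventually_gt_atTop (0:ℝ)] with u hu
      rw [Real.rpow_neg hu.le, div_eq_mul_inv, inv_inv, mul_comm]
  | succ k ih =>
    intro a
    have := isBigO_rpow_top_log_smul (show a < a + 1 by linarith) (ih (a + 1))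
    refine this.congr_left fun u => ?_
    simp only [smul_eq_mul]
    ring

/-- `(log u)^k e^{-u} = O(u^{-b})` at `0+`, for every `b > 0`. -/
lemma isBigO_zero (k : ℕ) : ∀ b : ℝ, 0 < b →
    (fun u : ℝ => Real.log u ^ k * Real.exp (-u)) =O[𝓝[>] (0:ℝ)] (· ^ (-b)) := by
  induction k with
  | zero =>
    intro b hb
    simp only [pow_zero, one_mul]
    refine IsBigO.of_bound 1 ?_
    filter_upwards [Ioo_mem_nhdsGT one_pos] with u hu
    rw [one_mul, Real.norm_eq_abs, Real.norm_eq_abs,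
      abs_of_pos (Real.exp_pos _), abs_of_pos (Real.rpow_pos_of_pos hu.1 _)]
    calc Real.exp (-u) ≤ 1 := Real.exp_le_one_iff.2 (by linarith [hu.1])
      _ ≤ u ^ (-b) :=
        Real.one_le_rpow_of_pos_of_le_one_of_nonpos hu.1 hu.2.le (by linarith)
  | succ k ih =>
    intro b hb
    have := isBigO_rpow_zero_log_smul (show b/2 < b by linarith) (ih (b/2) (by linarith))
    refine this.congr_left fun u => ?_
    simp only [smul_eq_mul]
    ring

/-- Local integrability of `(log u)^k e^{-u}` on `(0,∞)`. -/
lemma locIntegrable (k : ℕ) :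
    LocallyIntegrableOn (fun u : ℝ => Real.log u ^ k * Real.exp (-u)) (Ioi 0) := by
  apply ContinuousOn.locallyIntegrableOn _ measurableSet_Ioi
  exact ((Real.continuousOn_log.mono (fun u hu => ne_of_gt hu)).pow k).mul
    (Real.continuous_exp.comp continuous_neg).continuousOn

/-- Integrability of `u^(σ-1) (log u)^k e^{-u}` on `(0,∞)` for `σ > 0`. -/
lemma integrable_main {σ : ℝ} (hσ : 0 < σ) (k : ℕ) :
    IntegrableOn (fun u : ℝ => u ^ (σ - 1) * (Real.log u ^ k * Real.exp (-u))) (Ioi 0) :=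
  mellin_convergent_of_isBigO_scalar (locIntegrable k) (isBigO_top k (σ + 1))
    (by linarith) (isBigO_zero k (σ/2) (by linarith)) (by linarith)


/-- The iterated log-moment Gamma-type integral. -/
def Gk (k : ℕ) (x : ℝ) : ℝ :=
  ∫ u in Ioi (0:ℝ), u ^ (x - 1) * (Real.log u ^ k * Real.exp (-u))

lemma aesm (k : ℕ) (y : ℝ) :
    AEStronglyMeasurable (fun u : ℝ => u ^ (y - 1) * (Real.log u ^ k * Real.exp (-u)))
      (volume.restrict (Ioi 0)) := by
  refine (ContinuousOn.mul ?_ ?_).aestronglyMeasurable measurableSet_Ioi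
  · exact fun u hu =>
      (Real.continuousAt_rpow_const u _ (Or.inl (ne_of_gt hu))).continuousWithinAt
  · exact ((Real.continuousOn_log.mono (fun u hu => ne_of_gt hu)).pow k).mul
      (Real.continuous_exp.comp continuous_neg).continuousOn

lemma hasDerivAt_Gk (k : ℕ) {x : ℝ} (hx : 0 < x) :
    HasDerivAt (Gk k) (Gk (k+1) x) x := by
  set F : ℝ → ℝ → ℝ := fun y u => u ^ (y - 1) * (Real.log u ^ k * Real.exp (-u)) with hF
  set F' : ℝ → ℝ → ℝ := fun y u => u ^ (y - 1) * (Real.log u ^ (k+1) * Real.exp (-u)) with hF'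
  have key := hasDerivAt_integral_of_dominated_loc_of_deriv_le (F := F) (F' := F')
    (x₀ := x) (s := ball x (x/2)) (ball_mem_nhds x (by positivity))
    (Eventually.of_forall fun y => aesm k y)
    ((integrable_main hx k).congr_fun (fun u hu => rfl) measurableSet_Ioi)
    (aesm (k+1) x)
    (bound := fun u => (u ^ (x/2 - 1) + u ^ (3*x/2 - 1)) * (|Real.log u| ^ (k+1) * Real.exp (-u)))
    ?_ ?_ ?_
  · exact key.2
  · -- bound
    refine (ae_restrict_mem measurableSet_Ioi).mono fun u hu y hy => ?_
    have hu0 : (0:ℝ) < u := hu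
    have hy1 : x/2 - 1 ≤ y - 1 ∧ y - 1 ≤ 3*x/2 - 1 := by
      rw [mem_ball, Real.dist_eq, abs_lt] at hy
      constructor <;> linarith [hy.1, hy.2]
    have hrb : u ^ (y - 1) ≤ u ^ (x/2 - 1) + u ^ (3*x/2 - 1) := by
      rcases le_total u 1 with h1 | h1
      · have := Real.rpow_le_rpow_of_exponent_ge hu0 h1 hy1.1
        nlinarith [Real.rpow_nonneg hu0.le (3*x/2 - 1)]
      · have := Real.rpow_le_rpow_of_exponent_le h1 hy1.2
        nlinarith [Real.rpow_nonneg hu0.le (x/2 - 1)]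
    have : ‖F' y u‖ = u ^ (y - 1) * (|Real.log u| ^ (k+1) * Real.exp (-u)) := by
      simp only [hF', Real.norm_eq_abs, abs_mul, abs_pow,
        abs_of_pos (Real.exp_pos _), abs_of_pos (Real.rpow_pos_of_pos hu0 _)]
    rw [this]
    have hnn : 0 ≤ |Real.log u| ^ (k+1) * Real.exp (-u) := by positivity
    exact mul_le_mul_of_nonneg_right hrb hnn
  · -- bound integrable
    have h1 := (integrable_main (by positivity : (0:ℝ) < x/2) (k+1)).abs
    have h2 := (integrable_main (by positivity : (0:ℝ) < 3*x/2) (k+1)).abs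
    have h12 : IntegrableOn (fun u : ℝ =>
        |u ^ (x/2 - 1) * (Real.log u ^ (k+1) * Real.exp (-u))|
        + |u ^ (3*x/2 - 1) * (Real.log u ^ (k+1) * Real.exp (-u))|) (Ioi 0) := h1.add h2
    refine h12.congr_fun (fun u hu => ?_) measurableSet_Ioi
    have hu0 : (0:ℝ) < u := hu
    have e1 : ∀ p : ℝ, |u ^ p * (Real.log u ^ (k+1) * Real.exp (-u))|
        = u ^ p * (|Real.log u| ^ (k+1) * Real.exp (-u)) := by
      intro p
      rw [abs_mul, abs_mul, abs_pow, abs_of_pos (Real.rpow_pos_of_pos hu0 _),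
        abs_of_pos (Real.exp_pos _)]
    dsimp only
    rw [e1, e1, add_mul]
  · -- differentiability in y
    refine (ae_restrict_mem measurableSet_Ioi).mono fun u hu y _ => ?_
    have hu0 : (0:ℝ) < u := hu
    have h0 : HasDerivAt (fun y : ℝ => u ^ (y - 1)) (u ^ (y - 1) * Real.log u) y := by
      have := ((Real.hasStrictDerivAt_const_rpow hu0 (y - 1)).hasDerivAt).comp y
        ((hasDerivAt_id y).sub_const 1)
      simpa [Function.comp_def] using this
    have := h0.mul_const (Real.log u ^ k * Real.exp (-u))
    refine this.congr_deriv ?_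
    simp only [hF']
    ring


lemma Gamma_eq_Gk {x : ℝ} (hx : 0 < x) : Real.Gamma x = Gk 0 x := by
  rw [Real.Gamma_eq_integral hx, Gk]
  exact setIntegral_congr_fun measurableSet_Ioi fun u hu => by
    simp [mul_comm]

lemma Gk_one_one : Gk 1 1 = -eulerGamma := by
  rw [Gk, eulerGamma, neg_neg]
  exact setIntegral_congr_fun measurableSet_Ioi fun u hu => by
    simp

/-- Lower bound `Γ(s+1) ≥ e⁻¹` for `s ≥ 0`. -/
lemma Gamma_lb {s : ℝ} (hs : 0 ≤ s) : Real.exp (-1) ≤ Real.Gamma (s + 1) := by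
  have h1 : (0:ℝ) < s + 1 := by linarith
  rw [Real.Gamma_eq_integral h1]
  have hint : IntegrableOn (fun u : ℝ => Real.exp (-u) * u ^ (s + 1 - 1)) (Ioi 0) :=
    Real.GammaIntegral_convergent h1
  have step1 : ∫ u in Ioi (1:ℝ), Real.exp (-u) * u ^ (s + 1 - 1)
      ≤ ∫ u in Ioi (0:ℝ), Real.exp (-u) * u ^ (s + 1 - 1) := by
    apply setIntegral_mono_set hint
    · refine (ae_restrict_mem measurableSet_Ioi).mono fun u hu => ?_
      have : (0:ℝ) < u := hu
      positivity
    · exact HasSubset.Subset.eventuallyLE (Ioi_subset_Ioi zero_le_one)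
  refine le_trans ?_ step1
  have step2 : ∫ u in Ioi (1:ℝ), Real.exp (-u)
      ≤ ∫ u in Ioi (1:ℝ), Real.exp (-u) * u ^ (s + 1 - 1) := by
    apply setIntegral_mono_on
    · exact (exp_neg_integrableOn_Ioi 1 one_pos).congr_fun
        (fun u hu => by simp only [neg_one_mul]) measurableSet_Ioi
    · exact hint.mono_set (Ioi_subset_Ioi zero_le_one)
    · exact measurableSet_Ioi
    · intro u hu
      have hu1 : (1:ℝ) ≤ u := le_of_lt hu
      nth_rewrite 1 [← mul_one (Real.exp (-u))]
      apply mul_le_mul_of_nonneg_left _ (Real.exp_pos _).le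
      exact Real.one_le_rpow hu1 (by linarith)
  calc Real.exp (-1) = ∫ u in Ioi (1:ℝ), Real.exp (-u) := (integral_exp_neg_Ioi 1).symm
    _ ≤ _ := step2


/-- The second-derivative bound integrand. -/
def B : ℝ := ∫ u in Ioi (0:ℝ), (1 + u) * (Real.log u ^ 2 * Real.exp (-u))

lemma B_integrable :
    IntegrableOn (fun u : ℝ => (1 + u) * (Real.log u ^ 2 * Real.exp (-u))) (Ioi 0) := by
  have h1 := integrable_main (σ := 1) one_pos 2
  have h2 := integrable_main (σ := 2) two_pos 2
  have h12 : IntegrableOn (fun u : ℝ =>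
      u ^ ((1:ℝ) - 1) * (Real.log u ^ 2 * Real.exp (-u))
      + u ^ ((2:ℝ) - 1) * (Real.log u ^ 2 * Real.exp (-u))) (Ioi 0) := h1.add h2
  refine h12.congr_fun (fun u hu => ?_) measurableSet_Ioi
  have e0 : u ^ ((1:ℝ) - 1) = 1 := by
    norm_num
  have e2 : u ^ ((2:ℝ) - 1) = u := by
    norm_num
  dsimp only
  rw [e0, e2]
  ring

lemma B_nonneg : 0 ≤ B := by
  refine setIntegral_nonneg measurableSet_Ioi fun u hu => ?_
  have hu0 : (0:ℝ) < u := hu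
  have : (0:ℝ) ≤ Real.log u ^ 2 * Real.exp (-u) := by positivity
  nlinarith

lemma Gk2_bound {x : ℝ} (hx : x ∈ Icc (1:ℝ) 2) : |Gk 2 x| ≤ B := by
  rw [Gk, B, ← Real.norm_eq_abs]
  refine norm_integral_le_of_norm_le B_integrable ?_
  refine (ae_restrict_mem measurableSet_Ioi).mono fun u hu => ?_
  have hu0 : (0:ℝ) < u := hu
  have hb : u ^ (x - 1) ≤ 1 + u := by
    rcases le_total u 1 with h1 | h1
    · have := Real.rpow_le_one hu0.le h1 (by linarith [hx.1] : (0:ℝ) ≤ x - 1)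
      linarith
    · have h2 := Real.rpow_le_rpow_of_exponent_le h1 (by linarith [hx.2] : x - 1 ≤ 1)
      rw [Real.rpow_one] at h2
      linarith
  have : ‖u ^ (x - 1) * (Real.log u ^ 2 * Real.exp (-u))‖
      = u ^ (x - 1) * (Real.log u ^ 2 * Real.exp (-u)) := by
    rw [Real.norm_eq_abs, abs_of_nonneg]
    positivity
  rw [this]
  have hnn : (0:ℝ) ≤ Real.log u ^ 2 * Real.exp (-u) := by positivity
  nlinarith
 
/-- Taylor bound: `|Γ(1+s) - 1 + γ s| ≤ B s²` on `[0,1]`. -/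
lemma taylor_bound {s : ℝ} (hs : s ∈ Icc (0:ℝ) 1) :
    |Real.Gamma (1 + s) - 1 + eulerGamma * s| ≤ B * s ^ 2 := by
  -- first derivative is Lipschitz
  have hD1 : ∀ v ∈ Icc (0:ℝ) 1, HasDerivAt (fun w => Gk 1 (1 + w)) (Gk 2 (1 + v)) v := by
    intro v hv
    have h := (hasDerivAt_Gk 1 (by linarith [hv.1] : (0:ℝ) < 1 + v)).comp v
      ((hasDerivAt_id v).const_add 1)
    simpa [Function.comp_def] using h
  have step1 : ∀ v ∈ Icc (0:ℝ) 1, |Gk 1 (1 + v) - Gk 1 1| ≤ B * v := by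
    intro v hv
    have := Convex.norm_image_sub_le_of_norm_hasDerivWithin_le
      (f := fun w => Gk 1 (1 + w)) (f' := fun w => Gk 2 (1 + w)) (s := Icc (0:ℝ) 1)
      (fun w hw => (hD1 w hw).hasDerivWithinAt)
      (fun w hw => by
        rw [Real.norm_eq_abs]
        exact Gk2_bound ⟨by linarith [hw.1], by linarith [hw.2]⟩)
      (convex_Icc 0 1) (left_mem_Icc.2 zero_le_one) hv
    simpa [Real.norm_eq_abs, abs_of_nonneg hv.1, add_zero] using this
  -- second step
  have hD0 : ∀ v ∈ Icc (0:ℝ) s, HasDerivWithinAt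
      (fun w => Gk 0 (1 + w) - 1 - w * Gk 1 1)
      (Gk 1 (1 + v) - Gk 1 1) (Icc (0:ℝ) s) v := by
    intro v hv
    have h := (hasDerivAt_Gk 0 (by linarith [hv.1] : (0:ℝ) < 1 + v)).comp v
      ((hasDerivAt_id v).const_add 1)
    have h2 := (h.sub_const 1).sub ((hasDerivAt_id v).mul_const (Gk 1 1))
    refine (h2.congr_deriv ?_).hasDerivWithinAt
    simp [mul_comm]
  have step2 := Convex.norm_image_sub_le_of_norm_hasDerivWithin_le
    (f := fun w => Gk 0 (1 + w) - 1 - w * Gk 1 1)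
    (f' := fun w => Gk 1 (1 + w) - Gk 1 1) (s := Icc (0:ℝ) s)
    hD0
    (fun w hw => by
      rw [Real.norm_eq_abs]
      calc |Gk 1 (1 + w) - Gk 1 1| ≤ B * w :=
            step1 w ⟨hw.1, le_trans hw.2 hs.2⟩
        _ ≤ B * s := mul_le_mul_of_nonneg_left hw.2 B_nonneg)
    (convex_Icc 0 s) (left_mem_Icc.2 hs.1) (right_mem_Icc.2 hs.1)
  have h00 : Gk 0 (1 + 0) - 1 - 0 * Gk 1 1 = 0 := by
    rw [add_zero, ← Gamma_eq_Gk one_pos, Real.Gamma_one]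
    ring
  have step2' : ‖(Gk 0 (1 + s) - 1 - s * Gk 1 1) - (Gk 0 (1 + 0) - 1 - 0 * Gk 1 1)‖
      ≤ B * s * ‖s - 0‖ := step2
  rw [h00, sub_zero, sub_zero, Real.norm_eq_abs, Real.norm_eq_abs,
    abs_of_nonneg hs.1] at step2'
  have : Real.Gamma (1 + s) - 1 + eulerGamma * s
      = Gk 0 (1 + s) - 1 - s * Gk 1 1 := by
    rw [Gamma_eq_Gk (by linarith [hs.1] : (0:ℝ) < 1 + s), Gk_one_one]
    ring
  rw [this]
  calc |Gk 0 (1 + s) - 1 - s * Gk 1 1| ≤ B * s * s := step2'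
    _ = B * s ^ 2 := by ring

/-- Global bound for `1/Γ(1+s) - 1 - γ s`. -/
lemma key_bound : ∃ K : ℝ, 0 < K ∧ ∀ s : ℝ, 0 < s →
    |1 / Real.Gamma (s + 1) - 1 - eulerGamma * s| ≤ K * s ^ 2 := by
  set γ := eulerGamma with hγ
  set e1 := Real.exp 1 with he1
  have hc : (0:ℝ) ≤ γ^2 + B*(1+|γ|) := by
    have := B_nonneg
    have := abs_nonneg γ
    nlinarith [sq_nonneg γ]
  have ht1 : (0:ℝ) ≤ e1 * (γ^2 + B*(1+|γ|)) := mul_nonneg (Real.exp_pos 1).le hc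
  refine ⟨e1 * (γ^2 + B*(1+|γ|)) + (e1 + 1 + |γ|) + 1,
    by nlinarith [Real.exp_pos 1, abs_nonneg γ], fun s hs => ?_⟩
  have hΓlb : Real.exp (-1) ≤ Real.Gamma (s + 1) := Gamma_lb hs.le
  have hΓpos : 0 < Real.Gamma (s + 1) := lt_of_lt_of_le (Real.exp_pos _) hΓlb
  have hinv : 1 / Real.Gamma (s + 1) ≤ e1 := by
    rw [div_le_iff₀ hΓpos]
    calc (1:ℝ) = e1 * Real.exp (-1) := by
          rw [he1, ← Real.exp_add]; norm_num
      _ ≤ e1 * Real.Gamma (s + 1) :=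
          mul_le_mul_of_nonneg_left hΓlb (Real.exp_pos _).le
  have hinvpos : 0 < 1 / Real.Gamma (s + 1) := by positivity
  rcases le_total s 1 with h1 | h1
  · -- small s
    have hT := taylor_bound ⟨hs.le, h1⟩
    set R := Real.Gamma (1 + s) - 1 + γ * s with hR
    have hΓval : Real.Gamma (s + 1) = 1 - γ * s + R := by rw [hR, add_comm s 1]; ring
    have hone : (1 / Real.Gamma (s + 1)) * Real.Gamma (s + 1) = 1 :=
      one_div_mul_cancel (ne_of_gt hΓpos)
    have hexp : (1 / Real.Gamma (s + 1) - 1 - γ * s) * Real.Gamma (s + 1)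
        = γ^2 * s^2 - R * (1 + γ * s) := by
      calc (1 / Real.Gamma (s + 1) - 1 - γ * s) * Real.Gamma (s + 1)
          = (1 / Real.Gamma (s + 1)) * Real.Gamma (s + 1)
            - Real.Gamma (s + 1) - γ * s * Real.Gamma (s + 1) := by ring
        _ = 1 - Real.Gamma (s + 1) - γ * s * Real.Gamma (s + 1) := by rw [hone]
        _ = γ^2 * s^2 - R * (1 + γ * s) := by rw [hΓval]; ring
    have hid : |1 / Real.Gamma (s + 1) - 1 - γ * s|
        = |γ^2 * s^2 - R * (1 + γ * s)| / Real.Gamma (s + 1) := by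
      rw [← hexp, abs_mul, abs_of_pos hΓpos,
        mul_div_assoc, div_self (ne_of_gt hΓpos), mul_one]
    rw [hid, div_le_iff₀ hΓpos]
    have hnum : |γ^2 * s^2 - R * (1 + γ * s)| ≤ (γ^2 + B*(1+|γ|)) * s^2 := by
      have h2 : |R * (1 + γ * s)| ≤ B * s^2 * (1 + |γ|) := by
        rw [abs_mul]
        have hb1 : |1 + γ * s| ≤ 1 + |γ| := by
          calc |1 + γ * s| ≤ 1 + |γ * s| := by
                have := abs_add_le (1:ℝ) (γ * s)
                simpa using this
            _ ≤ 1 + |γ| := by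
                rw [abs_mul, abs_of_pos hs]
                nlinarith [abs_nonneg γ]
        exact mul_le_mul hT hb1 (abs_nonneg _) (mul_nonneg B_nonneg (sq_nonneg s))
      calc |γ^2 * s^2 - R * (1 + γ * s)| ≤ |γ^2 * s^2| + |R * (1 + γ * s)| :=
            abs_sub _ _
        _ ≤ γ^2 * s^2 + B * s^2 * (1 + |γ|) := by
            rw [abs_of_nonneg (by positivity : (0:ℝ) ≤ γ^2 * s^2)]
            linarith
        _ = (γ^2 + B*(1+|γ|)) * s^2 := by ring
    have h1e : (1:ℝ) ≤ e1 * Real.Gamma (s + 1) := by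
      calc (1:ℝ) = e1 * Real.exp (-1) := by rw [he1, ← Real.exp_add]; norm_num
        _ ≤ e1 * Real.Gamma (s + 1) :=
            mul_le_mul_of_nonneg_left hΓlb (Real.exp_pos _).le
    calc |γ^2 * s^2 - R * (1 + γ * s)| ≤ (γ^2 + B*(1+|γ|)) * s^2 := hnum
      _ ≤ (γ^2 + B*(1+|γ|)) * s^2 * (e1 * Real.Gamma (s + 1)) :=
          le_mul_of_one_le_right (mul_nonneg hc (sq_nonneg s)) h1e
      _ = (e1 * (γ^2 + B*(1+|γ|))) * s^2 * Real.Gamma (s+1) := by ring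
      _ ≤ ((e1 * (γ^2 + B*(1+|γ|)) + (e1 + 1 + |γ|) + 1) * s^2) * Real.Gamma (s+1) := by
          have hKle : e1 * (γ^2 + B*(1+|γ|))
              ≤ e1 * (γ^2 + B*(1+|γ|)) + (e1 + 1 + |γ|) + 1 := by
            nlinarith [Real.exp_pos 1, abs_nonneg γ]
          have := mul_le_mul_of_nonneg_right
            (mul_le_mul_of_nonneg_right hKle (sq_nonneg s)) hΓpos.le
          linarith [this]
  · -- large s
    have hs2 : 1 ≤ s^2 := by nlinarith
    have hss : s ≤ s^2 := by nlinarith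
    calc |1 / Real.Gamma (s + 1) - 1 - γ * s|
        ≤ |1 / Real.Gamma (s + 1)| + |1 + γ * s| := by
          have := abs_sub (1 / Real.Gamma (s + 1)) (1 + γ * s)
          refine le_trans (le_of_eq ?_) this
          ring_nf
      _ ≤ e1 + (1 + |γ| * s) := by
          gcongr
          · rw [abs_of_pos hinvpos]; exact hinv
          · calc |1 + γ * s| ≤ 1 + |γ * s| := by
                  have := abs_add_le (1:ℝ) (γ * s); simpa using this
              _ = 1 + |γ| * s := by rw [abs_mul, abs_of_pos hs]
      _ ≤ (e1 * (γ^2 + B*(1+|γ|)) + (e1 + 1 + |γ|) + 1) * s^2 := by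
          have he1p : (0:ℝ) < e1 := Real.exp_pos 1
          have p1 : e1 ≤ e1 * s^2 := le_mul_of_one_le_right he1p.le hs2
          have p2 : |γ| * s ≤ |γ| * s^2 :=
            mul_le_mul_of_nonneg_left hss (abs_nonneg γ)
          have p3 : (0:ℝ) ≤ e1 * (γ^2 + B*(1+|γ|)) * s^2 :=
            mul_nonneg ht1 (sq_nonneg s)
          nlinarith [abs_nonneg γ]


lemma Wident (γ δ l : ℝ) (hl : l ≠ 0) (ha : l + δ ≠ 0) :
    l^2*(1/(l+δ)^2 + γ*(2/(l+δ)^3)) - 1 - 2*(γ - δ)/l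
    = ((3*δ^2 - 6*γ*δ)*l^2 + (5*δ^3 - 6*γ*δ^2)*l + (2*δ^4 - 2*γ*δ^3)) / ((l+δ)^3*l) := by
  field_simp
  ring

/-- Integrability of `s^n e^{-as}` on `(0,∞)`. -/
lemma In (n : ℕ) {a : ℝ} (ha : 0 < a) :
    IntegrableOn (fun s : ℝ => s ^ n * Real.exp (-(a * s))) (Ioi 0) := by
  have h := integrableOn_rpow_mul_exp_neg_mul_rpow
    (show (-1:ℝ) < (n:ℝ) from lt_of_lt_of_le (by norm_num) (Nat.cast_nonneg n))
    one_pos ha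
  refine h.congr_fun (fun s hs => ?_) measurableSet_Ioi
  have hs0 : (0:ℝ) < s := hs
  dsimp only
  rw [Real.rpow_natCast, Real.rpow_one, neg_mul]

/-- `∫₀^∞ s^n e^{-as} ds = n! / a^(n+1)`. -/
lemma Jn (n : ℕ) {a : ℝ} (ha : 0 < a) :
    ∫ s in Ioi (0:ℝ), s ^ n * Real.exp (-(a * s)) = n.factorial / a^(n+1) := by
  have h := integral_rpow_mul_exp_neg_mul_Ioi (show (0:ℝ) < (n:ℝ) + 1 by positivity) ha
  calc ∫ s in Ioi (0:ℝ), s ^ n * Real.exp (-(a * s))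
      = ∫ s in Ioi (0:ℝ), s ^ (((n:ℝ) + 1) - 1) * Real.exp (-(a * s)) := by
        refine setIntegral_congr_fun measurableSet_Ioi fun s hs => ?_
        rw [show ((n:ℝ) + 1) - 1 = (n:ℝ) by ring, Real.rpow_natCast]
    _ = (1/a) ^ ((n:ℝ) + 1) * Real.Gamma ((n:ℝ) + 1) := h
    _ = n.factorial / a^(n+1) := by
        rw [Real.Gamma_nat_eq_factorial,
          show ((n:ℝ) + 1) = ((n+1 : ℕ) : ℝ) by push_cast; ring,
          Real.rpow_natCast, one_div, inv_pow]
        ring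


end GDAux

open GDAux

set_option maxHeartbeats 1000000

/-- **Small-time asymptotics of `G_θ`.**  For every `θ ∈ ℝ` there are `C > 0` and
`t₀ ∈ (0,1)` such that for all `0 < t ≤ t₀` the integral defining `G_θ(t)` converges and
`|t (log(1/t))² G_θ(t) - 1 - 2θ/log(1/t)| ≤ C/(log(1/t))²`, i.e.
`G_θ(t) = (1/(t (log(1/t))²)) {1 + 2θ/log(1/t) + O(1/(log(1/t))²)}` as `t ↓ 0`. -/
theorem GDickman_asymptotics (θ : ℝ) :
    ∃ C : ℝ, 0 < C ∧ ∃ t₀ ∈ Set.Ioo (0 : ℝ) 1, ∀ t : ℝ, 0 < t → t ≤ t₀ →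
      IntegrableOn
        (fun s : ℝ =>
          Real.exp ((θ - eulerGamma) * s) * s * t ^ (s - 1) / Real.Gamma (s + 1))
        (Set.Ioi 0) ∧
      |t * Real.log (1 / t) ^ 2 * GDickman θ t - 1 - 2 * θ / Real.log (1 / t)| ≤
        C / Real.log (1 / t) ^ 2 := by
  obtain ⟨K, hK, hKb⟩ := key_bound
  set γ : ℝ := eulerGamma with hγdef
  set δ : ℝ := γ - θ with hδdef
  have hθ : θ = γ - δ := by rw [hδdef]; ring
  set q : ℝ := |γ| + |δ| + 1 with hqdef
  have hq1 : (1:ℝ) ≤ q := by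
    have := abs_nonneg γ; have := abs_nonneg δ; simp only [hqdef]; linarith
  have hgq : |γ| ≤ q := by have := abs_nonneg δ; simp only [hqdef]; linarith
  have hdq : |δ| ≤ q := by have := abs_nonneg γ; simp only [hqdef]; linarith
  set c₀ : ℝ := 24 * q^4 with hc₀def
  have hc₀pos : 0 < c₀ := by positivity
  set Λ : ℝ := max 1 (4*(|δ|+1)) with hΛdef
  have hΛ1 : (1:ℝ) ≤ Λ := le_max_left _ _
  refine ⟨3*c₀ + 19*K + 1, by positivity, Real.exp (-Λ),
    ⟨Real.exp_pos _, by
      calc Real.exp (-Λ) < Real.exp 0 := Real.exp_lt_exp.2 (by linarith)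
        _ = 1 := Real.exp_zero⟩, fun t ht ht0 => ?_⟩
  -- basic quantities
  set l : ℝ := Real.log (1/t) with hldef
  have hlogt : Real.log t = -l := by
    rw [hldef, one_div, Real.log_inv]; ring
  have hlΛ : Λ ≤ l := by
    have h1 : Real.log t ≤ Real.log (Real.exp (-Λ)) :=
      Real.log_le_log ht ht0
    rw [Real.log_exp] at h1
    rw [hldef, one_div, Real.log_inv]; linarith
  have hl1 : (1:ℝ) ≤ l := le_trans hΛ1 hlΛ
  have hl0 : (0:ℝ) < l := lt_of_lt_of_le one_pos hl1
  have hdl : |δ| ≤ l/4 := by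
    have : 4*(|δ|+1) ≤ l := le_trans (le_max_right _ _) hlΛ
    linarith
  set a : ℝ := l + δ with hadef
  have ha34 : 3/4*l ≤ a := by
    have := neg_abs_le δ
    rw [hadef]; linarith
  have ha54 : a ≤ 5/4*l := by
    have := le_abs_self δ
    rw [hadef]; linarith
  have ha0 : (0:ℝ) < a := lt_of_lt_of_le (by linarith) ha34
  -- pointwise rewriting of the integrand
  have hpt : ∀ s : ℝ,
      Real.exp ((θ - γ) * s) * s * t ^ (s - 1) / Real.Gamma (s + 1)
      = (1/t) * (s * Real.exp (-(a * s)) * (1 / Real.Gamma (s + 1))) := by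
    intro s
    rw [Real.rpow_def_of_pos ht]
    have h1t : (1:ℝ)/t = Real.exp (-Real.log t) := by
      rw [Real.exp_neg, Real.exp_log ht, one_div]
    have hexp : Real.exp ((θ - γ) * s) * Real.exp (Real.log t * (s - 1))
        = (1/t) * Real.exp (-(a * s)) := by
      rw [h1t, ← Real.exp_add, ← Real.exp_add]
      congr 1
      rw [hlogt, hadef, hθ]
      ring
    calc Real.exp ((θ - γ) * s) * s * Real.exp (Real.log t * (s - 1)) / Real.Gamma (s + 1)
        = (Real.exp ((θ - γ) * s) * Real.exp (Real.log t * (s - 1)))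
          * (s * (1 / Real.Gamma (s + 1))) := by ring
      _ = (1/t) * Real.exp (-(a * s)) * (s * (1 / Real.Gamma (s + 1))) := by rw [hexp]
      _ = (1/t) * (s * Real.exp (-(a * s)) * (1 / Real.Gamma (s + 1))) := by ring
  -- continuity facts
  have hΓcont : ContinuousOn (fun s : ℝ => Real.Gamma (s + 1)) (Ioi 0) := by
    intro s hs
    have hs0 : (0:ℝ) < s := hs
    have h2 : ContinuousAt (fun y : ℝ => Gk 0 (y + 1)) s := by
      have hD := (hasDerivAt_Gk 0 (by linarith : (0:ℝ) < s + 1)).comp s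
        ((hasDerivAt_id s).add_const 1)
      exact hD.continuousAt
    refine (h2.congr ?_).continuousWithinAt
    filter_upwards [eventually_gt_nhds (show -1 < s by linarith)] with y hy
    exact (Gamma_eq_Gk (by linarith : (0:ℝ) < y + 1)).symm
  have hΓpos : ∀ s : ℝ, 0 < s → 0 < Real.Gamma (s + 1) := fun s hs =>
    Real.Gamma_pos_of_pos (by linarith)
  have hinvΓcont : ContinuousOn (fun s : ℝ => 1 / Real.Gamma (s + 1)) (Ioi 0) :=
    continuousOn_const.div hΓcont (fun s hs => ne_of_gt (hΓpos s hs))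
  have hinvΓ_le : ∀ s : ℝ, 0 < s → 1 / Real.Gamma (s + 1) ≤ Real.exp 1 := by
    intro s hs
    rw [div_le_iff₀ (hΓpos s hs)]
    calc (1:ℝ) = Real.exp 1 * Real.exp (-1) := by rw [← Real.exp_add]; norm_num
      _ ≤ Real.exp 1 * Real.Gamma (s + 1) :=
          mul_le_mul_of_nonneg_left (Gamma_lb hs.le) (Real.exp_pos _).le
  -- integrability of the original integrand
  have hfun : (fun s : ℝ => Real.exp ((θ - γ) * s) * s * t ^ (s - 1) / Real.Gamma (s + 1))
      = fun s : ℝ => (1/t) * (s * Real.exp (-(a * s)) * (1 / Real.Gamma (s + 1))) :=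
    funext hpt
  have hmeas : AEStronglyMeasurable
      (fun s : ℝ => Real.exp ((θ - γ) * s) * s * t ^ (s - 1) / Real.Gamma (s + 1))
      (volume.restrict (Ioi 0)) := by
    rw [hfun]
    refine ContinuousOn.aestronglyMeasurable ?_ measurableSet_Ioi
    refine continuousOn_const.mul (ContinuousOn.mul ?_ hinvΓcont)
    exact (continuous_id.mul (Real.continuous_exp.comp
      (continuous_const.mul continuous_id).neg)).continuousOn
  have hbnd : IntegrableOn
      (fun s : ℝ => Real.exp ((θ - γ) * s) * s * t ^ (s - 1) / Real.Gamma (s + 1))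
      (Ioi 0) := by
    have hg : IntegrableOn (fun s : ℝ => (1/t) * Real.exp 1 * (s ^ 1 * Real.exp (-(a * s))))
        (Ioi 0) := (In 1 ha0).const_mul _
    refine hg.mono' hmeas ?_
    refine (ae_restrict_mem measurableSet_Ioi).mono fun s hs => ?_
    have hs0 : (0:ℝ) < s := hs
    rw [hpt s, Real.norm_eq_abs, abs_of_nonneg (by
      have := (hΓpos s hs0).le
      have : (0:ℝ) ≤ 1 / Real.Gamma (s + 1) := by positivity
      positivity)]
    have h1 : s * Real.exp (-(a * s)) * (1 / Real.Gamma (s + 1))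
        ≤ s * Real.exp (-(a * s)) * Real.exp 1 :=
      mul_le_mul_of_nonneg_left (hinvΓ_le s hs0) (by positivity)
    calc (1/t) * (s * Real.exp (-(a * s)) * (1 / Real.Gamma (s + 1)))
        ≤ (1/t) * (s * Real.exp (-(a * s)) * Real.exp 1) :=
          mul_le_mul_of_nonneg_left h1 (by positivity)
      _ = (1/t) * Real.exp 1 * (s ^ 1 * Real.exp (-(a * s))) := by ring
  refine ⟨hbnd, ?_⟩
  -- split the integrand
  set φ : ℝ → ℝ := fun s => 1 / Real.Gamma (s + 1) - 1 - γ * s with hφdef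
  have hsplit : ∀ s ∈ Ioi (0:ℝ),
      s * Real.exp (-(a*s)) * (1 / Real.Gamma (s+1))
      = s ^ 1 * Real.exp (-(a*s)) + γ * (s ^ 2 * Real.exp (-(a*s)))
        + (s * Real.exp (-(a*s))) * φ s := by
    intro s hs
    simp only [hφdef]
    ring
  have hI1 := In 1 ha0
  have hI2 : IntegrableOn (fun s : ℝ => γ * (s ^ 2 * Real.exp (-(a*s)))) (Ioi 0) :=
    (In 2 ha0).const_mul γ
  have hφmeas : AEStronglyMeasurable (fun s : ℝ => (s * Real.exp (-(a*s))) * φ s)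
      (volume.restrict (Ioi 0)) := by
    refine ContinuousOn.aestronglyMeasurable (ContinuousOn.mul ?_ ?_) measurableSet_Ioi
    · exact (continuous_id.mul (Real.continuous_exp.comp
        (continuous_const.mul continuous_id).neg)).continuousOn
    · exact (hinvΓcont.sub continuousOn_const).sub
        (continuous_const.mul continuous_id).continuousOn
  have hφbound : ∀ᵐ s ∂(volume.restrict (Ioi (0:ℝ))),
      ‖(s * Real.exp (-(a*s))) * φ s‖ ≤ K * (s ^ 3 * Real.exp (-(a*s))) := by
    refine (ae_restrict_mem measurableSet_Ioi).mono fun s hs => ?_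
    have hs0 : (0:ℝ) < s := hs
    rw [Real.norm_eq_abs, abs_mul,
      abs_of_nonneg (by positivity : (0:ℝ) ≤ s * Real.exp (-(a*s)))]
    calc (s * Real.exp (-(a*s))) * |φ s| ≤ (s * Real.exp (-(a*s))) * (K * s^2) :=
          mul_le_mul_of_nonneg_left (hKb s hs0) (by positivity)
      _ = K * (s ^ 3 * Real.exp (-(a*s))) := by ring
  have hI3 : IntegrableOn (fun s : ℝ => (s * Real.exp (-(a*s))) * φ s) (Ioi 0) :=
    ((In 3 ha0).const_mul K).mono' hφmeas hφbound
  set E : ℝ := ∫ s in Ioi (0:ℝ), (s * Real.exp (-(a*s))) * φ s with hEdef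
  have hEbound : |E| ≤ K * (6 / a^4) := by
    rw [hEdef, ← Real.norm_eq_abs]
    refine le_trans (norm_integral_le_of_norm_le ((In 3 ha0).const_mul K) hφbound) ?_
    rw [integral_const_mul, Jn 3 ha0]
    norm_num [Nat.factorial]
  have hHval : (∫ s in Ioi (0:ℝ), s * Real.exp (-(a*s)) * (1 / Real.Gamma (s+1)))
      = 1/a^2 + γ * (2/a^3) + E := by
    have h0 : (∫ s in Ioi (0:ℝ), s * Real.exp (-(a*s)) * (1 / Real.Gamma (s+1)))
        = ∫ s in Ioi (0:ℝ), (s ^ 1 * Real.exp (-(a*s)) + γ * (s ^ 2 * Real.exp (-(a*s)))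
            + (s * Real.exp (-(a*s))) * φ s) :=
      setIntegral_congr_fun measurableSet_Ioi hsplit
    have hI12 : IntegrableOn (fun s : ℝ => s ^ 1 * Real.exp (-(a*s))
        + γ * (s ^ 2 * Real.exp (-(a*s)))) (Ioi 0) := hI1.add hI2
    rw [h0, integral_add hI12 hI3, integral_add hI1 hI2,
      Jn 1 ha0, integral_const_mul, Jn 2 ha0, ← hEdef]
    norm_num [Nat.factorial]
  have hGval : GDickman θ t = (1/t) * ∫ s in Ioi (0:ℝ),
      s * Real.exp (-(a*s)) * (1 / Real.Gamma (s+1)) := by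
    simp only [GDickman, ← hγdef]
    rw [hfun, integral_const_mul]
  have ht2 : t * l^2 * GDickman θ t = l^2 * (1/a^2 + γ * (2/a^3) + E) := by
    rw [hGval, hHval]
    field_simp
  rw [ht2]
  set W : ℝ := l^2*(1/a^2 + γ*(2/a^3)) - 1 - 2*θ/l with hWdef
  have hX : l^2*(1/a^2 + γ*(2/a^3) + E) - 1 - 2*θ/l = W + l^2*E := by
    rw [hWdef]; ring
  rw [hX]
  set N : ℝ := (3*δ^2 - 6*γ*δ)*l^2 + (5*δ^3 - 6*γ*δ^2)*l + (2*δ^4 - 2*γ*δ^3) with hNdef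
  clear_value γ δ q c₀ Λ l a E W N
  have hWid : W = N / (a^3 * l) := by
    have hane : l + δ ≠ 0 := by rw [← hadef]; exact ne_of_gt ha0
    rw [hWdef, hNdef, hθ, hadef]
    exact Wident γ δ l (ne_of_gt hl0) hane
  -- bound on N
  have hd2 : δ^2 ≤ q^2 := by
    have h := pow_le_pow_left₀ (abs_nonneg δ) hdq 2
    rwa [sq_abs] at h
  have hd3 : |δ|^3 ≤ q^3 := pow_le_pow_left₀ (abs_nonneg δ) hdq 3
  have hd4 : δ^4 ≤ q^4 := by
    have h := pow_le_pow_left₀ (abs_nonneg δ) hdq 4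
    have : |δ|^4 = δ^4 := by
      rw [← abs_pow, abs_of_nonneg (by positivity : (0:ℝ) ≤ δ^4)]
    linarith
  have hgdp : |γ| *|δ| ≤ q*q := mul_le_mul hgq hdq (abs_nonneg δ) (by linarith)
  have hgd2 : |γ| *δ^2 ≤ q*q^2 :=
    mul_le_mul hgq hd2 (sq_nonneg δ) (by linarith)
  have hgd3 : |γ| *|δ|^3 ≤ q*q^3 :=
    mul_le_mul hgq hd3 (by positivity) (by linarith)
  have c1 : |3*δ^2 - 6*γ*δ| ≤ 9*q^2 := by
    have e1 : |3*δ^2 - 6*γ*δ| ≤ |3*δ^2| + |6*γ*δ| := abs_sub _ _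
    have e2 : |3*δ^2| = 3*δ^2 := abs_of_nonneg (by positivity)
    have e3 : |6*γ*δ| = 6*(|γ| *|δ|) := by
      rw [mul_assoc, abs_mul, abs_mul, abs_of_nonneg (by norm_num : (0:ℝ) ≤ 6)]
    have hqq : q*q = q^2 := by ring
    linarith [hd2, hgdp]
  have c2 : |5*δ^3 - 6*γ*δ^2| ≤ 11*q^3 := by
    have e1 : |5*δ^3 - 6*γ*δ^2| ≤ |5*δ^3| + |6*γ*δ^2| := abs_sub _ _
    have e2 : |5*δ^3| = 5*|δ|^3 := by
      rw [abs_mul, abs_pow, abs_of_nonneg (by norm_num : (0:ℝ) ≤ 5)]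
    have e3 : |6*γ*δ^2| = 6*(|γ| *δ^2) := by
      rw [mul_assoc, abs_mul, abs_mul, abs_of_nonneg (by norm_num : (0:ℝ) ≤ 6),
        abs_of_nonneg (sq_nonneg δ)]
    have hqq : q*q^2 = q^3 := by ring
    linarith [hd3, hgd2]
  have c3 : |2*δ^4 - 2*γ*δ^3| ≤ 4*q^4 := by
    have e1 : |2*δ^4 - 2*γ*δ^3| ≤ |2*δ^4| + |2*γ*δ^3| := abs_sub _ _
    have e2 : |2*δ^4| = 2*δ^4 := abs_of_nonneg (by positivity)
    have e3 : |2*γ*δ^3| = 2*(|γ| *|δ|^3) := by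
      rw [mul_assoc, abs_mul, abs_mul, abs_pow, abs_of_nonneg (by norm_num : (0:ℝ) ≤ 2)]
    have hqq : q*q^3 = q^4 := by ring
    linarith [hd4, hgd3]
  have hNabs : |N| ≤ c₀ * l^2 := by
    have t1 : |N| ≤ |3*δ^2 - 6*γ*δ| *l^2 + |5*δ^3 - 6*γ*δ^2| *l + |2*δ^4 - 2*γ*δ^3| := by
      rw [hNdef]
      calc |(3*δ^2 - 6*γ*δ)*l^2 + (5*δ^3 - 6*γ*δ^2)*l + (2*δ^4 - 2*γ*δ^3)|
          ≤ |(3*δ^2 - 6*γ*δ)*l^2 + (5*δ^3 - 6*γ*δ^2)*l| + |2*δ^4 - 2*γ*δ^3| :=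
            abs_add_le _ _
        _ ≤ (|(3*δ^2 - 6*γ*δ)*l^2| + |(5*δ^3 - 6*γ*δ^2)*l|) + |2*δ^4 - 2*γ*δ^3| :=
            add_le_add (abs_add_le _ _) le_rfl
        _ = |3*δ^2 - 6*γ*δ| *l^2 + |5*δ^3 - 6*γ*δ^2| *l + |2*δ^4 - 2*γ*δ^3| := by
            rw [abs_mul, abs_mul, abs_of_pos hl0,
              abs_of_nonneg (by positivity : (0:ℝ) ≤ l^2)]
    have hq24 : q^2 ≤ q^4 := pow_le_pow_right₀ hq1 (by norm_num)
    have hq34 : q^3 ≤ q^4 := pow_le_pow_right₀ hq1 (by norm_num)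
    have hll : l ≤ l^2 := by
      calc l = l^1 := (pow_one l).symm
        _ ≤ l^2 := pow_le_pow_right₀ hl1 (by norm_num)
    have h1l : (1:ℝ) ≤ l^2 := by
      calc (1:ℝ) = 1^2 := by norm_num
        _ ≤ l^2 := pow_le_pow_left₀ zero_le_one hl1 2
    have p1 : |3*δ^2 - 6*γ*δ| *l^2 ≤ 9*q^4*l^2 := by
      calc |3*δ^2 - 6*γ*δ| *l^2 ≤ 9*q^2*l^2 :=
            mul_le_mul_of_nonneg_right c1 (by positivity)
        _ ≤ 9*q^4*l^2 :=
            mul_le_mul_of_nonneg_right (by linarith) (by positivity)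
    have p2 : |5*δ^3 - 6*γ*δ^2| *l ≤ 11*q^4*l^2 := by
      have hml : q^3*l ≤ q^4*l^2 :=
        mul_le_mul hq34 hll hl0.le (by positivity)
      calc |5*δ^3 - 6*γ*δ^2| *l ≤ 11*q^3*l :=
            mul_le_mul_of_nonneg_right c2 hl0.le
        _ = 11*(q^3*l) := by ring
        _ ≤ 11*(q^4*l^2) := by linarith
        _ = 11*q^4*l^2 := by ring
    have p3 : |2*δ^4 - 2*γ*δ^3| ≤ 4*q^4*l^2 := by
      calc |2*δ^4 - 2*γ*δ^3| ≤ 4*q^4 := c3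
        _ ≤ 4*q^4*l^2 := le_mul_of_one_le_right (by positivity) h1l
    rw [hc₀def]
    linarith
  have hWb : |W| ≤ 3*c₀/l^2 := by
    rw [hWid, abs_div, abs_of_pos (by positivity : (0:ℝ) < a^3*l),
      div_le_div_iff₀ (by positivity) (by positivity : (0:ℝ) < l^2)]
    have hal : (3/4*l)^3*l ≤ a^3*l :=
      mul_le_mul_of_nonneg_right (pow_le_pow_left₀ (by positivity) ha34 3) hl0.le
    have h4 : (0:ℝ) ≤ l^4 := by positivity
    calc |N| * l^2 ≤ (c₀*l^2)*l^2 :=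
          mul_le_mul_of_nonneg_right hNabs (by positivity)
      _ = c₀*l^4 := by ring
      _ ≤ c₀*(81/64*l^4) := mul_le_mul_of_nonneg_left (by linarith) hc₀pos.le
      _ = 3*c₀*((3/4*l)^3*l) := by ring
      _ ≤ 3*c₀*(a^3*l) :=
          mul_le_mul_of_nonneg_left hal (by positivity)
  have hEb2 : l^2*|E| ≤ 19*K/l^2 := by
    have h1 : l^2*|E| ≤ l^2*(K*(6/a^4)) :=
      mul_le_mul_of_nonneg_left hEbound (by positivity)
    have e : l^2*(K*(6/a^4)) = 6*K*l^2/a^4 := by ring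
    have hb : 6*K*l^2/a^4 ≤ 19*K/l^2 := by
      rw [div_le_div_iff₀ (by positivity) (by positivity : (0:ℝ) < l^2)]
      have hal4 : (3/4*l)^4 ≤ a^4 := pow_le_pow_left₀ (by positivity) ha34 4
      have h4 : (0:ℝ) ≤ l^4 := by positivity
      have hKl4 : (0:ℝ) ≤ K*l^4 := mul_nonneg hK.le h4
      calc 6*K*l^2*l^2 = 6*(K*l^4) := by ring
        _ ≤ 1539/256*(K*l^4) := by linarith
        _ = 19*K*((3/4*l)^4) := by ring
        _ ≤ 19*K*a^4 := mul_le_mul_of_nonneg_left hal4 (by positivity)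
    linarith [h1, e ▸ hb]
  calc |W + l^2*E| ≤ |W| + |l^2*E| := abs_add_le _ _
    _ ≤ 3*c₀/l^2 + 19*K/l^2 := by
        rw [abs_mul, abs_of_nonneg (by positivity : (0:ℝ) ≤ l^2)]
        exact add_le_add hWb hEb2
    _ ≤ (3*c₀ + 19*K + 1)/l^2 := by
        rw [← add_div]
        apply div_le_div_of_nonneg_right ?_ (by positivity)
        linarith

end
end
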